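/- arXiv:1106.4587 — 7 statements merged into one kernel-verified Lean document; each statement's English description precedes it below -/
import Mathlib

section
/- Let T = (V_T, E_T) be a finite forest with maximum degree bounded by d ≥ 2, let ε, δ ∈ (0,1/2), and let k = 481·d²/(δε). Then there exists a function f : V_T → 2^{V_T} such that: (1) for all v ∈ V_T, v ∈ f(v); (2) for all v ∈ V_T and all w ∈ f(v), f(w) = f(v); (3) for all v ∈ V_T, |f(v)| ≤ k; (4) for all v ∈ V_T, the subgraph of T induced by f(v) is connected; and (5) the set C of vertices w ∈ V_T such that f(w) is a (k, δ, 2)-isolated neighborhood of w in T has size at least (1 − ε/60)|V_T|. -/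
/-- The external neighborhood `N(S)` of a set `S` of vertices: vertices not in `S`
that are adjacent to at least one vertex of `S`. Its cardinality is the cut-size `η(S)`. -/
def cutSet {V : Type} (G : SimpleGraph V) (S : Set V) : Set V :=
  {u | u ∉ S ∧ ∃ w ∈ S, G.Adj w u}

/-- `S` is a `(k, δ, c)`-isolated neighborhood of `v` in `G`: it contains `v`, induces a
connected subgraph, has size at most `k`, cut-size `η(S) ≤ c`, and vertex conductance
`φ(S) = η(S)/|S| ≤ δ`. -/
def IsIsoNbhd {V : Type} (G : SimpleGraph V) (v : V) (S : Set V) (k δ : ℝ) (c : ℕ) : Prop :=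
  v ∈ S ∧ (G.induce S).Connected ∧ (S.ncard : ℝ) ≤ k ∧ (cutSet G S).ncard ≤ c ∧
    ((cutSet G S).ncard : ℝ) / (S.ncard : ℝ) ≤ δ

/-!
Root every tree of the forest and process its vertices from the leaves up, maintaining a partition
of the processed vertices into connected parts, each closed or open. An open part is a subtree
below its top vertex with fewer than `large` vertices and at most one outer child (a child outside
the part), and fewer than `small` vertices if it has one. Processing `v` merges `v` with the open
parts of its children into a part `M` whose cut consists of its outer children and the parent of
`v`. If `M` has at most one outer child and is big enough, it is closed as a good part: cut at most
2, conductance at most `δ`. If `M` has two or more outer children, `v` becomes a singleton and the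
child parts are closed: the large ones are good (their cut is `{v}`), `v` and the small ones bad.
At the end the open parts hang from roots and are closed, bad only if they have an outer child.

Bad vertices are paid for by tokens, the closed vertices whose parent is not closed, through the
potential `|bad| + weight · #tokens ≤ ρ · |closed|`. Closing a part consumes its outer children as
tokens and creates at most one token (its top). A split therefore frees the weight of a token,
which pays for its at most `1 + d (small - 1)` bad vertices; a good part without outer child has
at least `large ≥ weight / ρ` vertices, which pays for its new token.
-/

namespace SimpleGraph

variable {V : Type} {G : SimpleGraph V}

lemma IsAcyclic.eq_of_adj_of_dist_add_one_eq (hG : G.IsAcyclic) {r u w₁ w₂ : V}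
    (hr : G.Reachable r u) (h₁ : G.Adj u w₁) (h₂ : G.Adj u w₂)
    (hd₁ : G.dist r w₁ + 1 = G.dist r u) (hd₂ : G.dist r w₂ + 1 = G.dist r u) : w₁ = w₂ := by
  classical
  obtain ⟨q, hq, -⟩ := hr.exists_path_of_dist
  suffices key : ∀ w, G.Adj u w → G.dist r w + 1 = G.dist r u → w = q.penultimate from
    (key w₁ h₁ hd₁).trans (key w₂ h₂ hd₂).symm
  intro w hw hdw
  obtain ⟨q', hq', hq'len⟩ := (hr.trans hw.reachable).exists_path_of_dist
  have hu : u ∉ q'.support := fun hu => by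
    have := (dist_le (q'.takeUntil u hu)).trans (q'.length_takeUntil_le_length hu)
    omega
  exact hG.eq_penultimate_of_adj_end hq hw
    (hG.mem_support_of_ne_mem_support_of_adj_of_isPath hq hq' hw hu)

theorem IsAcyclic.exists_parent_map (hG : G.IsAcyclic) :
    ∃ (p : V → Option V) (rank : V → ℕ), (∀ u w, G.Adj u w ↔ p u = some w ∨ p w = some u) ∧
      ∀ u w, p u = some w → rank w < rank u := by
  classical
  set root : V → V := fun u => (G.connectedComponentMk u).out
  have hreach (u : V) : G.Reachable (root u) u := ConnectedComponent.exact (Quot.out_eq _)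
  set rank : V → ℕ := fun u => G.dist (root u) u
  have hroot {u w : V} (h : G.Adj u w) : root w = root u := by
    simp [root, ConnectedComponent.connectedComponentMk_eq_of_adj h]
  have hrank {u w : V} (h : G.Adj u w) :
      rank w < rank u ↔ G.dist (root u) w + 1 = G.dist (root u) u := by
    simp only [rank, hroot h]
    have := hG.dist_eq_dist_add_one_of_adj_of_reachable (root u) h (hreach u)
    omega
  set p : V → Option V := fun u =>
    if h : ∃ w, G.Adj u w ∧ rank w < rank u then some h.choose else none
  have hp {u w : V} : p u = some w ↔ G.Adj u w ∧ rank w < rank u := by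
    constructor
    · intro h
      simp only [p] at h
      split_ifs at h with hex
      exact Option.some_injective _ h ▸ hex.choose_spec
    · rintro ⟨hadj, hlt⟩
      have hex : ∃ w, G.Adj u w ∧ rank w < rank u := ⟨w, hadj, hlt⟩
      have hc := hex.choose_spec
      simp only [p, dif_pos hex, Option.some.injEq]
      exact hG.eq_of_adj_of_dist_add_one_eq (hreach u) hc.1 hadj ((hrank hc.1).mp hc.2)
        ((hrank hadj).mp hlt)
  refine ⟨p, rank, fun u w => ?_, fun u w h => (hp.mp h).2⟩
  rw [hp, hp]
  constructor
  · intro h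
    have hne : rank u ≠ rank w := by
      simp only [rank, hroot h]
      exact hG.dist_ne_of_adj h (hreach u)
    rcases hne.lt_or_gt with hlt | hlt
    · exact Or.inr ⟨h.symm, hlt⟩
    · exact Or.inl ⟨h, hlt⟩
  · rintro (⟨h, -⟩ | ⟨h, -⟩)
    exacts [h, h.symm]

lemma induce_insert_biUnion_connected (v : V) (A : Set V) (f : V → Set V)
    (hconn : ∀ u ∈ A, (G.induce (f u)).Connected) (hmem : ∀ u ∈ A, u ∈ f u)
    (hadj : ∀ u ∈ A, G.Adj v u) : (G.induce (insert v (⋃ u ∈ A, f u))).Connected := by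
  refine G.induce_connected_of_patches v (Set.mem_insert v _) fun {x} hx => ?_
  rcases Set.mem_insert_iff.mp hx with rfl | hx
  · exact ⟨{x}, by simp, rfl, rfl, Reachable.refl _⟩
  · obtain ⟨u, hu, hxu⟩ := Set.mem_iUnion₂.mp hx
    have hc : (G.induce ({v} ∪ f u)).Connected :=
      connected_induce_union Preconnected.of_subsingleton (hconn u hu).preconnected rfl
        (hmem u hu) (hadj u hu)
    refine ⟨{v} ∪ f u, ?_, Or.inl rfl, Or.inr hxu, hc.preconnected _ _⟩
    exact Set.union_subset (by simp) ((Set.subset_biUnion_of_mem hu).trans (Set.subset_insert v _))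

end SimpleGraph

lemma Set.ncard_biUnion_le_ncard_mul {ι α : Type*} [Finite ι] (A : Set ι) (f : ι → Set α) (m : ℕ)
    (h : ∀ a ∈ A, (f a).ncard ≤ m) : (⋃ a ∈ A, f a).ncard ≤ A.ncard * m := by
  classical
  have := Finset.set_ncard_biUnion_le A.toFinite.toFinset f
  simp only [Set.Finite.mem_toFinset] at this
  refine this.trans ?_
  rw [Set.ncard_eq_toFinset_card A]
  exact Finset.sum_le_card_nsmul _ _ _ (by simpa using h)

open SimpleGraph

namespace ForestPartition

variable {V : Type}

def outerChildren (p : V → Option V) (Q : Set V) : Set V :=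
  {w | w ∉ Q ∧ ∃ u ∈ Q, p w = some u}

/-- Thresholds of the greedy construction: an open part becomes closed once it has `large`
vertices, or `small` vertices and one outer child; `weight` is the price of a token. -/
structure Scales (d : ℕ) (δ ρ k : ℝ) where
  small : ℕ
  large : ℕ
  weight : ℕ
  small_le_large : small ≤ large
  small_le_weight : small ≤ weight
  one_add_mul_small_le_weight : 1 + d * (small - 1) ≤ weight
  one_add_mul_large_le : ((1 + d * (large - 1) : ℕ) : ℝ) ≤ k
  two_le_mul_small : 2 ≤ δ * small
  weight_le_mul_large : (weight : ℝ) ≤ ρ * large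

namespace Scales

variable {d : ℕ} {δ ρ k : ℝ}

lemma delta_pos (S : Scales d δ ρ k) : 0 < δ := by
  have := S.two_le_mul_small
  by_contra! h
  nlinarith [(Nat.cast_nonneg S.small : (0 : ℝ) ≤ S.small)]

lemma one_le_mul_large (S : Scales d δ ρ k) : 1 ≤ δ * S.large := by
  have : δ * S.small ≤ δ * S.large := by
    gcongr
    exacts [S.delta_pos.le, S.small_le_large]
  linarith [S.two_le_mul_small]

lemma rho_nonneg (S : Scales d δ ρ k) : 0 ≤ ρ := by
  have hsmall : 0 < S.small := by
    have := S.two_le_mul_small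
    by_contra! h
    simp only [Nat.le_zero.mp h, CharP.cast_eq_zero, mul_zero] at this
    norm_num at this
  have : (1 : ℝ) ≤ S.weight := by exact_mod_cast hsmall.trans_le S.small_le_weight
  have := S.weight_le_mul_large
  by_contra! h
  nlinarith [(Nat.cast_nonneg S.large : (0 : ℝ) ≤ S.large)]

end Scales

theorem nonempty_scales {d : ℕ} (hd : 1 ≤ d) {ε δ : ℝ} (hε : 0 < ε) (hε1 : ε ≤ 1)
    (hδ : 0 < δ) (hδ1 : δ ≤ 1) : Nonempty (Scales d δ (ε / 60) (481 * d ^ 2 / (δ * ε))) := by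
  set s := ⌈2 / δ⌉₊
  set L := ⌈60 * d * s / ε⌉₊
  have hs : 2 / δ ≤ s := Nat.le_ceil _
  have hs' : (s : ℝ) ≤ 3 / δ := by
    have : (s : ℝ) < 2 / δ + 1 := Nat.ceil_lt_add_one (by positivity)
    have : 1 ≤ 1 / δ := by rw [le_div_iff₀ hδ]; linarith
    linarith [show 3 / δ = 2 / δ + 1 / δ by ring]
  have hL : 60 * d * s / ε ≤ L := Nat.le_ceil _
  have hL' : (L : ℝ) < 60 * d * s / ε + 1 := Nat.ceil_lt_add_one (by positivity)
  have hdR : (1 : ℝ) ≤ d := by exact_mod_cast hd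
  have hs1 : 1 ≤ s := by
    have : (1 : ℝ) ≤ s := le_trans (by rw [le_div_iff₀ hδ]; linarith) hs
    exact_mod_cast this
  have hsL : s ≤ L := by
    have : (s : ℝ) ≤ 60 * d * s / ε := by
      rw [le_div_iff₀ hε]; nlinarith
    exact_mod_cast this.trans hL
  refine ⟨⟨s, L, d * s, hsL, Nat.le_mul_of_pos_left s hd, ?_, ?_, ?_, ?_⟩⟩
  · have : d * (s - 1) + d = d * s := by
      rw [← Nat.mul_succ, Nat.succ_eq_add_one, Nat.sub_add_cancel hs1]
    omega
  · have hnat : 1 + d * (L - 1) ≤ d * L := by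
      have : d * (L - 1) + d = d * L := by
        rw [← Nat.mul_succ, Nat.succ_eq_add_one, Nat.sub_add_cancel (hs1.trans hsL)]
      omega
    calc (((1 + d * (L - 1) : ℕ)) : ℝ) ≤ d * L := by exact_mod_cast hnat
      _ ≤ d * (60 * d * (3 / δ) / ε + 1) := by
        have : 60 * d * s / ε ≤ 60 * d * (3 / δ) / ε := by gcongr
        gcongr
        linarith
      _ = 180 * d ^ 2 / (δ * ε) + d := by field_simp; ring
      _ ≤ 481 * d ^ 2 / (δ * ε) := by
        have : d ≤ d ^ 2 / (δ * ε) := by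
          rw [le_div_iff₀ (by positivity)]; nlinarith [mul_le_one₀ hδ1 hε.le hε1]
        have : 481 * (d : ℝ) ^ 2 / (δ * ε) = 180 * d ^ 2 / (δ * ε) + 301 * (d ^ 2 / (δ * ε)) := by
          ring
        nlinarith
  · calc (2 : ℝ) = δ * (2 / δ) := by field_simp
      _ ≤ δ * s := by gcongr
  · push_cast
    calc (d : ℝ) * s = ε / 60 * (60 * d * s / ε) := by field_simp
      _ ≤ ε / 60 * L := by gcongr

structure IsConnectedPartition (T : SimpleGraph V) (f : V → Set V) (U : Set V) (m : ℕ) : Prop where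
  mem_self : ∀ v ∈ U, v ∈ f v
  subset : ∀ v ∈ U, f v ⊆ U
  eq_of_mem : ∀ v ∈ U, ∀ w ∈ f v, f w = f v
  connected : ∀ v ∈ U, (T.induce (f v)).Connected
  ncard_le : ∀ v ∈ U, (f v).ncard ≤ m

open scoped Classical in
noncomputable def withPart (f : V → Set V) (Q : Set V) (x : V) : Set V :=
  if x ∈ Q then Q else f x

lemma withPart_of_mem {f : V → Set V} {Q : Set V} {x : V} (hx : x ∈ Q) : withPart f Q x = Q := by
  simp [withPart, hx]

lemma withPart_of_notMem {f : V → Set V} {Q : Set V} {x : V} (hx : x ∉ Q) :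
    withPart f Q x = f x := by
  simp [withPart, hx]

lemma IsConnectedPartition.withPart {T : SimpleGraph V} {f : V → Set V} {U Q : Set V} {m : ℕ}
    {v : V} (hf : IsConnectedPartition T f U m) (hvQ : v ∈ Q) (hQU : Q ⊆ insert v U)
    (hQ : ∀ x ∈ Q, x ∈ U → f x ⊆ Q) (hconn : (T.induce Q).Connected) (hcard : Q.ncard ≤ m) :
    IsConnectedPartition T (withPart f Q) (insert v U) m := by
  have hU {x : V} (hx : x ∈ insert v U) (hxQ : x ∉ Q) : x ∈ U :=
    (Set.mem_insert_iff.mp hx).resolve_left (by rintro rfl; exact hxQ hvQ)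
  have hdisj {x w : V} (hx : x ∈ U) (hxQ : x ∉ Q) (hw : w ∈ f x) : w ∉ Q := fun hwQ =>
    hxQ (hQ w hwQ (hf.subset x hx hw) (hf.eq_of_mem x hx w hw ▸ hf.mem_self x hx))
  constructor
  · intro x hx
    by_cases hxQ : x ∈ Q
    · rwa [withPart_of_mem hxQ]
    · rw [withPart_of_notMem hxQ]; exact hf.mem_self x (hU hx hxQ)
  · intro x hx
    by_cases hxQ : x ∈ Q
    · rwa [withPart_of_mem hxQ]
    · rw [withPart_of_notMem hxQ]
      exact (hf.subset x (hU hx hxQ)).trans (Set.subset_insert v U)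
  · intro x hx w hw
    by_cases hxQ : x ∈ Q
    · rw [withPart_of_mem hxQ] at hw ⊢; exact withPart_of_mem hw
    · rw [withPart_of_notMem hxQ] at hw ⊢
      rw [withPart_of_notMem (hdisj (hU hx hxQ) hxQ hw)]
      exact hf.eq_of_mem x (hU hx hxQ) w hw
  · intro x hx
    by_cases hxQ : x ∈ Q
    · rwa [withPart_of_mem hxQ]
    · rw [withPart_of_notMem hxQ]; exact hf.connected x (hU hx hxQ)
  · intro x hx
    by_cases hxQ : x ∈ Q
    · rwa [withPart_of_mem hxQ]
    · rw [withPart_of_notMem hxQ]; exact hf.ncard_le x (hU hx hxQ)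

def HasTop (p : V → Option V) (U Q : Set V) (m : V) : Prop :=
  m ∈ Q ∧ (∀ w, p m = some w → w ∉ U) ∧ ∀ x ∈ Q, x ≠ m → ∃ w ∈ Q, p x = some w

def IsOpenPart (p : V → Option V) (U : Set V) (small large : ℕ) (Q : Set V) : Prop :=
  (∃ m, HasTop p U Q m) ∧ ((outerChildren p Q).ncard = 0 ∧ Q.ncard < large ∨
    (outerChildren p Q).ncard = 1 ∧ Q.ncard < small)

lemma HasTop.parent_mem {p : V → Option V} {U Q : Set V} {m : V} (h : HasTop p U Q m) {x w : V}
    (hx : x ∈ Q) (hw : p x = some w) : w ∈ Q ∨ x = m := by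
  by_cases hxm : x = m
  · exact Or.inr hxm
  · obtain ⟨w', hw', hpw'⟩ := h.2.2 x hx hxm
    exact Or.inl (Option.some_injective _ (hw.symm.trans hpw') ▸ hw')

lemma HasTop.cutSet_subset {T : SimpleGraph V} {p : V → Option V}
    (hadj : ∀ u w, T.Adj u w ↔ p u = some w ∨ p w = some u) {U Q : Set V} {m : V}
    (h : HasTop p U Q m) : cutSet T Q ⊆ outerChildren p Q ∪ {w | p m = some w} := by
  rintro x ⟨hxQ, u, huQ, hux⟩
  rcases (hadj u x).mp hux with h' | h'
  · rcases h.parent_mem huQ h' with h'' | rfl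
    exacts [absurd h'' hxQ, Or.inr h']
  · exact Or.inl ⟨hxQ, u, huQ, h'⟩

lemma HasTop.ncard_cutSet_le [Finite V] {T : SimpleGraph V} {p : V → Option V}
    (hadj : ∀ u w, T.Adj u w ↔ p u = some w ∨ p w = some u) {U Q : Set V} {m : V}
    (h : HasTop p U Q m) : (cutSet T Q).ncard ≤ (outerChildren p Q).ncard + 1 := by
  have hpar : ({w | p m = some w} : Set V).ncard ≤ 1 :=
    (Set.ncard_le_one).mpr fun a ha b hb => Option.some_injective _ (ha.symm.trans hb)
  calc (cutSet T Q).ncard ≤ (outerChildren p Q ∪ {w | p m = some w}).ncard :=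
        Set.ncard_le_ncard (h.cutSet_subset hadj)
    _ ≤ _ := (Set.ncard_union_le _ _).trans (by omega)

lemma isIsoNbhd_of_ncard_cutSet_le [Finite V] {T : SimpleGraph V} {x : V} {Q : Set V} {k δ : ℝ}
    {c : ℕ} (hx : x ∈ Q) (hconn : (T.induce Q).Connected) (hk : (Q.ncard : ℝ) ≤ k)
    (hcut : (cutSet T Q).ncard ≤ c) (hc : c ≤ 2) (hδ : (c : ℝ) ≤ δ * Q.ncard) :
    IsIsoNbhd T x Q k δ 2 := by
  have hQ : (0 : ℝ) < Q.ncard := by exact_mod_cast (Set.ncard_pos).mpr ⟨x, hx⟩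
  refine ⟨hx, hconn, hk, hcut.trans hc, ?_⟩
  rw [div_le_iff₀ hQ]
  exact le_trans (by exact_mod_cast hcut) hδ

lemma ncard_outerChildren_compl_union_le [Finite V] {p : V → Option V} {C P E : Set V}
    (hPE : ∀ x ∈ P, ∀ w, p x = some w → w ∈ P ∨ x ∈ E)
    (hsub : outerChildren p P ⊆ outerChildren p Cᶜ) :
    ((outerChildren p (C ∪ P)ᶜ).ncard : ℝ) ≤
      (outerChildren p Cᶜ).ncard - (outerChildren p P).ncard + E.ncard := by
  have hsub' : outerChildren p (C ∪ P)ᶜ ⊆ (outerChildren p Cᶜ \ outerChildren p P) ∪ E := by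
    rintro w ⟨hwCP, u, hu, hpw⟩
    simp only [Set.compl_union, Set.mem_inter_iff, Set.mem_compl_iff, not_and, not_not] at hwCP hu
    rcases Classical.em (w ∈ C) with hwC | hwC
    · refine Or.inl ⟨⟨not_not.mpr hwC, u, hu.1, hpw⟩, fun ⟨hwP, u', hu'P, hpw'⟩ => hu.2 ?_⟩
      exact Option.some_injective _ (hpw.symm.trans hpw') ▸ hu'P
    · have hwP := hwCP hwC
      rcases hPE w hwP u hpw with h | h
      exacts [absurd h hu.2, Or.inr h]
  calc ((outerChildren p (C ∪ P)ᶜ).ncard : ℝ)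
      ≤ ((outerChildren p Cᶜ \ outerChildren p P).ncard + E.ncard : ℕ) := by
        exact_mod_cast (Set.ncard_le_ncard hsub').trans (Set.ncard_union_le _ _)
    _ = _ := by rw [Nat.cast_add, Set.ncard_sdiff hsub, Nat.cast_sub (Set.ncard_le_ncard hsub)]

lemma potential_union [Finite V] {p : V → Option V} {C P bad bad' : Set V} {κ b : ℕ} {e ρ : ℝ}
    (hCP : Disjoint C P)
    (hcount : (bad.ncard : ℝ) + κ * (outerChildren p Cᶜ).ncard ≤ ρ * C.ncard)
    (hbad : bad'.ncard ≤ bad.ncard + b)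
    (htok : ((outerChildren p (C ∪ P)ᶜ).ncard : ℝ) ≤
      (outerChildren p Cᶜ).ncard - (outerChildren p P).ncard + e)
    (hpay : κ * (e - (outerChildren p P).ncard) + b ≤ ρ * P.ncard) :
    (bad'.ncard : ℝ) + κ * (outerChildren p (C ∪ P)ᶜ).ncard ≤ ρ * (C ∪ P).ncard := by
  have hbad' : (bad'.ncard : ℝ) ≤ bad.ncard + b := by exact_mod_cast hbad
  have htok' := mul_le_mul_of_nonneg_left htok (Nat.cast_nonneg κ : (0 : ℝ) ≤ κ)
  rw [Set.ncard_union_eq hCP, Nat.cast_add]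
  nlinarith

/-- The state after processing the vertices of `U`; the tokens are `outerChildren p closedᶜ`. -/
structure Stage (T : SimpleGraph V) (p : V → Option V) {d : ℕ} {δ ρ k : ℝ} (S : Scales d δ ρ k)
    (U : Set V) where
  part : V → Set V
  closed : Set V
  bad : Set V
  isPartition : IsConnectedPartition T part U (1 + d * (S.large - 1))
  closed_subset : closed ⊆ U
  bad_subset : bad ⊆ closed
  part_subset_closed : ∀ v ∈ closed, part v ⊆ closed
  isIsoNbhd : ∀ v ∈ closed, v ∉ bad → IsIsoNbhd T v (part v) k δ 2
  isOpenPart : ∀ v ∈ U, v ∉ closed → IsOpenPart p U S.small S.large (part v)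
  potential : (bad.ncard : ℝ) + S.weight * (outerChildren p closedᶜ).ncard ≤ ρ * closed.ncard

namespace Stage

variable {T : SimpleGraph V} {p : V → Option V} {d : ℕ} {δ ρ k : ℝ} {S : Scales d δ ρ k}
  {U : Set V}

lemma nonempty_empty : Nonempty (Stage T p S ∅) :=
  ⟨{
    part := fun x => {x}
    closed := ∅
    bad := ∅
    isPartition := ⟨nofun, nofun, nofun, nofun, nofun⟩
    closed_subset := subset_rfl
    bad_subset := subset_rfl
    part_subset_closed := nofun
    isIsoNbhd := nofun
    isOpenPart := nofun
    potential := by simp [outerChildren]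
  }⟩

lemma notMem_closed_of_mem_part (pk : Stage T p S U) {v w : V} (hv : v ∈ U)
    (hvC : v ∉ pk.closed) (hw : w ∈ pk.part v) : w ∉ pk.closed := fun hwC =>
  hvC (pk.part_subset_closed w hwC
    (pk.isPartition.eq_of_mem v hv w hw ▸ pk.isPartition.mem_self v hv))

lemma ncard_part_lt_large (pk : Stage T p S U) {v : V} (hv : v ∈ U) (hvC : v ∉ pk.closed) :
    (pk.part v).ncard < S.large := by
  rcases (pk.isOpenPart v hv hvC).2 with ⟨-, h⟩ | ⟨-, h⟩
  exacts [h, h.trans_le S.small_le_large]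

/-- An open outer child of `Q` would be the top of its part, with its parent in `Q` still
unprocessed. -/
lemma outerChildren_subset (pk : Stage T p S U) {Q : Set V} (hQC : ∀ x ∈ Q, x ∉ pk.closed)
    (hQ : ∀ x ∈ Q, x ∈ U → pk.part x ⊆ Q) (hdown : ∀ w u, p w = some u → u ∈ Q → w ∈ U)
    (htop : ∀ w u, p w = some u → u ∈ Q → u ∉ U → w ∉ pk.closed → w ∈ Q) :
    outerChildren p Q ⊆ outerChildren p pk.closedᶜ := by
  rintro w ⟨hwQ, u, huQ, hpw⟩
  refine ⟨?_, u, hQC u huQ, hpw⟩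
  rw [Set.mem_compl_iff, not_not]
  by_contra hwC
  have hwU := hdown w u hpw huQ
  obtain ⟨m, hm, hmU, hrest⟩ := (pk.isOpenPart w hwU hwC).1
  by_cases hwm : w = m
  · exact hwQ (htop w u hpw huQ (hmU u (hwm ▸ hpw)) hwC)
  · obtain ⟨u', hu', hpu'⟩ := hrest w (pk.isPartition.mem_self w hwU) hwm
    obtain rfl : u = u' := Option.some_injective _ (hpw.symm.trans hpu')
    have := pk.isPartition.eq_of_mem w hwU u hu'
    exact hwQ (hQ u huQ (pk.isPartition.subset w hwU hu')
      (this ▸ pk.isPartition.mem_self w hwU))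

def openChildren (pk : Stage T p S U) (v : V) : Set V := {u | p u = some v ∧ u ∉ pk.closed}

def merged (pk : Stage T p S U) (v : V) : Set V := insert v (⋃ u ∈ pk.openChildren v, pk.part u)

variable {v : V}

lemma openChildren_subset (pk : Stage T p S U)
    (hdown : ∀ x y, p x = some y → y ∈ insert v U → x ∈ U) : pk.openChildren v ⊆ U :=
  fun u hu => hdown u v hu.1 (Set.mem_insert v U)

lemma hasTop_part_of_mem_openChildren (pk : Stage T p S U) (hvU : v ∉ U)
    (hdown : ∀ x y, p x = some y → y ∈ insert v U → x ∈ U) {u : V}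
    (hu : u ∈ pk.openChildren v) : HasTop p U (pk.part u) u := by
  have huU := pk.openChildren_subset hdown hu
  obtain ⟨m, -, -, hrest⟩ := (pk.isOpenPart u huU hu.2).1
  have hpu {w : V} (hw : p u = some w) : w = v := Option.some_injective _ (hw.symm.trans hu.1)
  have hmu : m = u := by
    by_contra hmu
    obtain ⟨w, hw, hpw⟩ := hrest u (pk.isPartition.mem_self u huU) (Ne.symm hmu)
    exact hvU (hpu hpw ▸ pk.isPartition.subset u huU hw)
  subst hmu
  exact ⟨pk.isPartition.mem_self m huU, fun w hw => hpu hw ▸ hvU, hrest⟩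

lemma mem_merged (pk : Stage T p S U) {x : V} :
    x ∈ pk.merged v ↔ x = v ∨ ∃ u ∈ pk.openChildren v, x ∈ pk.part u := by
  simp [merged]

lemma part_subset_merged (pk : Stage T p S U) {u : V} (hu : u ∈ pk.openChildren v) :
    pk.part u ⊆ pk.merged v :=
  fun _ hx => pk.mem_merged.mpr (Or.inr ⟨u, hu, hx⟩)

lemma merged_subset (pk : Stage T p S U)
    (hdown : ∀ x y, p x = some y → y ∈ insert v U → x ∈ U) : pk.merged v ⊆ insert v U := by
  intro x hx
  rcases pk.mem_merged.mp hx with rfl | ⟨u, hu, hxu⟩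
  · exact Set.mem_insert x U
  · exact Set.mem_insert_of_mem v
      (pk.isPartition.subset u (pk.openChildren_subset hdown hu) hxu)

lemma notMem_closed_of_mem_merged (pk : Stage T p S U) (hvU : v ∉ U)
    (hdown : ∀ x y, p x = some y → y ∈ insert v U → x ∈ U) {x : V} (hx : x ∈ pk.merged v) :
    x ∉ pk.closed := by
  rcases pk.mem_merged.mp hx with rfl | ⟨u, hu, hxu⟩
  · exact fun h => hvU (pk.closed_subset h)
  · exact pk.notMem_closed_of_mem_part (pk.openChildren_subset hdown hu) hu.2 hxu

lemma part_subset_merged_of_mem (pk : Stage T p S U) (hvU : v ∉ U)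
    (hdown : ∀ x y, p x = some y → y ∈ insert v U → x ∈ U) {x : V} (hx : x ∈ pk.merged v)
    (hxU : x ∈ U) : pk.part x ⊆ pk.merged v := by
  rcases pk.mem_merged.mp hx with rfl | ⟨u, hu, hxu⟩
  · exact absurd hxU hvU
  · rw [pk.isPartition.eq_of_mem u (pk.openChildren_subset hdown hu) x hxu]
    exact pk.part_subset_merged hu

lemma hasTop_merged (pk : Stage T p S U) (hvU : v ∉ U)
    (hdown : ∀ x y, p x = some y → y ∈ insert v U → x ∈ U)
    (hpar : ∀ w, p v = some w → w ∉ insert v U) : HasTop p (insert v U) (pk.merged v) v := by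
  refine ⟨Set.mem_insert v _, hpar, fun x hx hxv => ?_⟩
  obtain ⟨u, hu, hxu⟩ := (pk.mem_merged.mp hx).resolve_left hxv
  by_cases hxu' : x = u
  · exact ⟨v, Set.mem_insert v _, hxu' ▸ hu.1⟩
  · obtain ⟨w, hw, hpw⟩ := (pk.hasTop_part_of_mem_openChildren hvU hdown hu).2.2 x hxu hxu'
    exact ⟨w, pk.part_subset_merged hu hw, hpw⟩

lemma merged_connected (pk : Stage T p S U)
    (hadj : ∀ u w, T.Adj u w ↔ p u = some w ∨ p w = some u)
    (hdown : ∀ x y, p x = some y → y ∈ insert v U → x ∈ U) :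
    (T.induce (pk.merged v)).Connected :=
  induce_insert_biUnion_connected v _ pk.part
    (fun u hu => pk.isPartition.connected u (pk.openChildren_subset hdown hu))
    (fun u hu => pk.isPartition.mem_self u (pk.openChildren_subset hdown hu))
    (fun u hu => ((hadj u v).mpr (Or.inl hu.1)).symm)

lemma ncard_openChildren_le [Finite V] (pk : Stage T p S U)
    (hadj : ∀ u w, T.Adj u w ↔ p u = some w ∨ p w = some u)
    (hdeg : ∀ v : V, (T.neighborSet v).ncard ≤ d) : (pk.openChildren v).ncard ≤ d :=
  (Set.ncard_le_ncard fun u hu => ((hadj u v).mpr (Or.inl hu.1)).symm).trans (hdeg v)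

lemma ncard_merged_le [Finite V] (pk : Stage T p S U)
    (hadj : ∀ u w, T.Adj u w ↔ p u = some w ∨ p w = some u)
    (hdeg : ∀ v : V, (T.neighborSet v).ncard ≤ d)
    (hdown : ∀ x y, p x = some y → y ∈ insert v U → x ∈ U) :
    (pk.merged v).ncard ≤ 1 + d * (S.large - 1) := by
  have hchildren := pk.ncard_openChildren_le (v := v) hadj hdeg
  have hparts := Set.ncard_biUnion_le_ncard_mul (pk.openChildren v) pk.part (S.large - 1)
    fun u hu => Nat.le_sub_one_of_lt
      (pk.ncard_part_lt_large (pk.openChildren_subset hdown hu) hu.2)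
  calc (pk.merged v).ncard ≤ (⋃ u ∈ pk.openChildren v, pk.part u).ncard + 1 :=
        Set.ncard_insert_le _ _
    _ ≤ (pk.openChildren v).ncard * (S.large - 1) + 1 := by omega
    _ ≤ 1 + d * (S.large - 1) := by nlinarith

lemma outerChildren_merged_subset (pk : Stage T p S U) (hvU : v ∉ U)
    (hdown : ∀ x y, p x = some y → y ∈ insert v U → x ∈ U) :
    outerChildren p (pk.merged v) ⊆ outerChildren p pk.closedᶜ := by
  refine pk.outerChildren_subset (fun x => pk.notMem_closed_of_mem_merged hvU hdown)
    (fun x => pk.part_subset_merged_of_mem hvU hdown)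
    (fun w u hpw hu => hdown w u hpw (pk.merged_subset hdown hu)) fun w u hpw hu huU hwC => ?_
  have huv : u = v := (Set.mem_insert_iff.mp (pk.merged_subset hdown hu)).resolve_right huU
  have hw : w ∈ pk.openChildren v := ⟨huv ▸ hpw, hwC⟩
  exact pk.part_subset_merged hw
    (pk.isPartition.mem_self w (pk.openChildren_subset hdown hw))

lemma isOpenPart_of_notMem_merged (pk : Stage T p S U)
    (hdown : ∀ x y, p x = some y → y ∈ insert v U → x ∈ U) {x : V} (hx : x ∈ U)
    (hxC : x ∉ pk.closed) (hxM : x ∉ pk.merged v) :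
    IsOpenPart p (insert v U) S.small S.large (pk.part x) := by
  obtain ⟨⟨m, hm, hmU, hrest⟩, hsize⟩ := pk.isOpenPart x hx hxC
  refine ⟨⟨m, hm, fun w hw hwU => ?_, hrest⟩, hsize⟩
  rcases Set.mem_insert_iff.mp hwU with rfl | hwU
  · have hmC : m ∈ pk.openChildren w := ⟨hw, pk.notMem_closed_of_mem_part hx hxC hm⟩
    have := pk.isPartition.eq_of_mem x hx m hm
    exact hxM (pk.part_subset_merged hmC (this ▸ pk.isPartition.mem_self x hx))
  · exact hmU w hw hwU

lemma ncard_outerChildren_compl_union_merged_le [Finite V] (pk : Stage T p S U) (hvU : v ∉ U)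
    (hdown : ∀ x y, p x = some y → y ∈ insert v U → x ∈ U)
    (hpar : ∀ w, p v = some w → w ∉ insert v U) :
    ((outerChildren p (pk.closed ∪ pk.merged v)ᶜ).ncard : ℝ) ≤
      (outerChildren p pk.closedᶜ).ncard - (outerChildren p (pk.merged v)).ncard + 1 := by
  have := ncard_outerChildren_compl_union_le (E := {v})
    (fun x hx w hw => (pk.hasTop_merged hvU hdown hpar).parent_mem hx hw)
    (pk.outerChildren_merged_subset hvU hdown)
  simpa using this

lemma mem_of_notMem_merged (pk : Stage T p S U) {x : V} (hx : x ∈ insert v U)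
    (hxM : x ∉ pk.merged v) : x ∈ U :=
  (Set.mem_insert_iff.mp hx).resolve_left fun h => hxM (by rw [h]; exact Set.mem_insert v _)

lemma closed_disjoint_merged (pk : Stage T p S U) (hvU : v ∉ U)
    (hdown : ∀ x y, p x = some y → y ∈ insert v U → x ∈ U) : Disjoint pk.closed (pk.merged v) :=
  Set.disjoint_right.mpr fun _ hx => pk.notMem_closed_of_mem_merged hvU hdown hx

lemma isPartition_withPart_merged [Finite V] (pk : Stage T p S U)
    (hadj : ∀ u w, T.Adj u w ↔ p u = some w ∨ p w = some u)
    (hdeg : ∀ v : V, (T.neighborSet v).ncard ≤ d) (hvU : v ∉ U)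
    (hdown : ∀ x y, p x = some y → y ∈ insert v U → x ∈ U) :
    IsConnectedPartition T (withPart pk.part (pk.merged v)) (insert v U) (1 + d * (S.large - 1)) :=
  pk.isPartition.withPart (Set.mem_insert v _) (pk.merged_subset hdown)
    (fun _ hx => pk.part_subset_merged_of_mem hvU hdown hx) (pk.merged_connected hadj hdown)
    (pk.ncard_merged_le hadj hdeg hdown)

lemma isIsoNbhd_merged [Finite V] (pk : Stage T p S U)
    (hadj : ∀ u w, T.Adj u w ↔ p u = some w ∨ p w = some u)
    (hdeg : ∀ v : V, (T.neighborSet v).ncard ≤ d) (hvU : v ∉ U)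
    (hdown : ∀ x y, p x = some y → y ∈ insert v U → x ∈ U)
    (hpar : ∀ w, p v = some w → w ∉ insert v U)
    (hclose : (outerChildren p (pk.merged v)).ncard = 0 ∧ S.large ≤ (pk.merged v).ncard ∨
      (outerChildren p (pk.merged v)).ncard = 1 ∧ S.small ≤ (pk.merged v).ncard)
    {x : V} (hx : x ∈ pk.merged v) : IsIsoNbhd T x (pk.merged v) k δ 2 := by
  refine isIsoNbhd_of_ncard_cutSet_le hx (pk.merged_connected hadj hdown)
    (le_trans (by exact_mod_cast pk.ncard_merged_le hadj hdeg hdown) S.one_add_mul_large_le)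
    ((pk.hasTop_merged hvU hdown hpar).ncard_cutSet_le hadj) (by omega) ?_
  rcases hclose with ⟨hD, hM⟩ | ⟨hD, hM⟩ <;> rw [hD] <;> push_cast
  · exact S.one_le_mul_large.trans
      (mul_le_mul_of_nonneg_left (by exact_mod_cast hM) S.delta_pos.le)
  · exact S.two_le_mul_small.trans
      (mul_le_mul_of_nonneg_left (by exact_mod_cast hM) S.delta_pos.le)

/-- A large open part below `v` has no outer child, so its cut is the single vertex `v`. -/
lemma isIsoNbhd_part_of_mem_openChildren [Finite V] (pk : Stage T p S U)
    (hadj : ∀ u w, T.Adj u w ↔ p u = some w ∨ p w = some u) (hvU : v ∉ U)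
    (hdown : ∀ x y, p x = some y → y ∈ insert v U → x ∈ U) {u : V} (hu : u ∈ pk.openChildren v)
    (hlarge : S.small ≤ (pk.part u).ncard) {x : V} (hx : x ∈ pk.part u) :
    IsIsoNbhd T x (pk.part u) k δ 2 := by
  have huU := pk.openChildren_subset hdown hu
  have hD : (outerChildren p (pk.part u)).ncard = 0 := by
    rcases (pk.isOpenPart u huU hu.2).2 with ⟨hD, -⟩ | ⟨-, h⟩
    exacts [hD, absurd h (not_lt.mpr hlarge)]
  refine isIsoNbhd_of_ncard_cutSet_le hx (pk.isPartition.connected u huU)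
    (le_trans (by exact_mod_cast pk.isPartition.ncard_le u huU) S.one_add_mul_large_le)
    ((pk.hasTop_part_of_mem_openChildren hvU hdown hu).ncard_cutSet_le hadj) (by omega) ?_
  rw [hD]
  push_cast
  exact (by linarith [S.two_le_mul_small] : (1 : ℝ) ≤ δ * S.small).trans
    (mul_le_mul_of_nonneg_left (by exact_mod_cast hlarge) S.delta_pos.le)

def splitBad (pk : Stage T p S U) (v : V) : Set V :=
  insert v (⋃ u ∈ {u | u ∈ pk.openChildren v ∧ (pk.part u).ncard < S.small}, pk.part u)

lemma splitBad_subset_merged (pk : Stage T p S U) : pk.splitBad v ⊆ pk.merged v :=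
  Set.insert_subset_insert (Set.biUnion_subset_biUnion_left fun _ hu => hu.1)

lemma ncard_splitBad_le [Finite V] (pk : Stage T p S U)
    (hadj : ∀ u w, T.Adj u w ↔ p u = some w ∨ p w = some u)
    (hdeg : ∀ v : V, (T.neighborSet v).ncard ≤ d) : (pk.splitBad v).ncard ≤ S.weight := by
  set small := {u | u ∈ pk.openChildren v ∧ (pk.part u).ncard < S.small}
  have hparts := Set.ncard_biUnion_le_ncard_mul small pk.part (S.small - 1)
    fun u hu => Nat.le_sub_one_of_lt hu.2
  have hsmall : small.ncard ≤ d :=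
    (Set.ncard_le_ncard fun u hu => hu.1).trans (pk.ncard_openChildren_le hadj hdeg)
  have := Set.ncard_insert_le v (⋃ u ∈ small, pk.part u)
  have := Nat.mul_le_mul_right (S.small - 1) hsmall
  have := S.one_add_mul_small_le_weight
  change (insert v (⋃ u ∈ small, pk.part u)).ncard ≤ S.weight
  omega

lemma nonempty_extend_of_open [Finite V] (pk : Stage T p S U)
    (hadj : ∀ u w, T.Adj u w ↔ p u = some w ∨ p w = some u)
    (hdeg : ∀ v : V, (T.neighborSet v).ncard ≤ d) (hvU : v ∉ U)
    (hdown : ∀ x y, p x = some y → y ∈ insert v U → x ∈ U)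
    (hpar : ∀ w, p v = some w → w ∉ insert v U)
    (hopen : (outerChildren p (pk.merged v)).ncard = 0 ∧ (pk.merged v).ncard < S.large ∨
      (outerChildren p (pk.merged v)).ncard = 1 ∧ (pk.merged v).ncard < S.small) :
    Nonempty (Stage T p S (insert v U)) := by
  have hCM := pk.closed_disjoint_merged hvU hdown
  refine ⟨{
    part := withPart pk.part (pk.merged v)
    closed := pk.closed
    bad := pk.bad
    isPartition := pk.isPartition_withPart_merged hadj hdeg hvU hdown
    closed_subset := pk.closed_subset.trans (Set.subset_insert v U)
    bad_subset := pk.bad_subset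
    part_subset_closed := fun x hx => ?_
    isIsoNbhd := fun x hx hxb => ?_
    isOpenPart := fun x hx hxC => ?_
    potential := pk.potential
  }⟩
  · rw [withPart_of_notMem (Set.disjoint_left.mp hCM hx)]
    exact pk.part_subset_closed x hx
  · rw [withPart_of_notMem (Set.disjoint_left.mp hCM hx)]
    exact pk.isIsoNbhd x hx hxb
  · by_cases hxM : x ∈ pk.merged v
    · rw [withPart_of_mem hxM]
      exact ⟨⟨v, pk.hasTop_merged hvU hdown hpar⟩, hopen⟩
    · rw [withPart_of_notMem hxM]
      exact pk.isOpenPart_of_notMem_merged hdown (pk.mem_of_notMem_merged hx hxM) hxC hxM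

lemma nonempty_extend_of_close [Finite V] (pk : Stage T p S U)
    (hadj : ∀ u w, T.Adj u w ↔ p u = some w ∨ p w = some u)
    (hdeg : ∀ v : V, (T.neighborSet v).ncard ≤ d) (hvU : v ∉ U)
    (hdown : ∀ x y, p x = some y → y ∈ insert v U → x ∈ U)
    (hpar : ∀ w, p v = some w → w ∉ insert v U)
    (hclose : (outerChildren p (pk.merged v)).ncard = 0 ∧ S.large ≤ (pk.merged v).ncard ∨
      (outerChildren p (pk.merged v)).ncard = 1 ∧ S.small ≤ (pk.merged v).ncard) :
    Nonempty (Stage T p S (insert v U)) := by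
  have hCM := pk.closed_disjoint_merged hvU hdown
  refine ⟨{
    part := withPart pk.part (pk.merged v)
    closed := pk.closed ∪ pk.merged v
    bad := pk.bad
    isPartition := pk.isPartition_withPart_merged hadj hdeg hvU hdown
    closed_subset := Set.union_subset (pk.closed_subset.trans (Set.subset_insert v U))
      (pk.merged_subset hdown)
    bad_subset := pk.bad_subset.trans Set.subset_union_left
    part_subset_closed := ?_
    isIsoNbhd := ?_
    isOpenPart := fun x hx hxC => ?_
    potential := ?_
  }⟩
  · rintro x (hx | hx)
    · rw [withPart_of_notMem (Set.disjoint_left.mp hCM hx)]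
      exact (pk.part_subset_closed x hx).trans Set.subset_union_left
    · rw [withPart_of_mem hx]
      exact Set.subset_union_right
  · rintro x (hx | hx) hxb
    · rw [withPart_of_notMem (Set.disjoint_left.mp hCM hx)]
      exact pk.isIsoNbhd x hx hxb
    · rw [withPart_of_mem hx]
      exact pk.isIsoNbhd_merged hadj hdeg hvU hdown hpar hclose hx
  · have hxM : x ∉ pk.merged v := fun h => hxC (Or.inr h)
    rw [withPart_of_notMem hxM]
    exact pk.isOpenPart_of_notMem_merged hdown (pk.mem_of_notMem_merged hx hxM)
      (fun h => hxC (Or.inl h)) hxM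
  · refine potential_union (b := 0) hCM pk.potential le_rfl
      (pk.ncard_outerChildren_compl_union_merged_le hvU hdown hpar) ?_
    have hρ := S.rho_nonneg
    rcases hclose with ⟨hD, hM⟩ | ⟨hD, -⟩ <;> rw [hD] <;> push_cast
    · calc (S.weight * (1 - 0) + 0 : ℝ) ≤ ρ * S.large := by linarith [S.weight_le_mul_large]
        _ ≤ ρ * (pk.merged v).ncard := by gcongr
    · simp only [sub_self, mul_zero, add_zero]
      positivity

lemma nonempty_extend_of_split [Finite V] (pk : Stage T p S U)
    (hadj : ∀ u w, T.Adj u w ↔ p u = some w ∨ p w = some u)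
    (hdeg : ∀ v : V, (T.neighborSet v).ncard ≤ d) (hvU : v ∉ U)
    (hdown : ∀ x y, p x = some y → y ∈ insert v U → x ∈ U)
    (hpar : ∀ w, p v = some w → w ∉ insert v U)
    (hsplit : 2 ≤ (outerChildren p (pk.merged v)).ncard) :
    Nonempty (Stage T p S (insert v U)) := by
  have hvM : ({v} : Set V) ⊆ pk.merged v := Set.singleton_subset_iff.mpr (Set.mem_insert v _)
  refine ⟨{
    part := withPart pk.part {v}
    closed := pk.closed ∪ pk.merged v
    bad := pk.bad ∪ pk.splitBad v
    isPartition := pk.isPartition.withPart (Set.mem_singleton v) (by simp)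
      (fun x hx hxU => absurd (Set.mem_singleton_iff.mp hx ▸ hxU) hvU)
      ((connected_iff _).mpr ⟨Preconnected.of_subsingleton, ⟨⟨v, rfl⟩⟩⟩) (by simp)
    closed_subset := Set.union_subset (pk.closed_subset.trans (Set.subset_insert v U))
      (pk.merged_subset hdown)
    bad_subset := Set.union_subset_union pk.bad_subset pk.splitBad_subset_merged
    part_subset_closed := fun x hx => ?_
    isIsoNbhd := fun x hx hxb => ?_
    isOpenPart := fun x hx hxC => ?_
    potential := ?_
  }⟩
  · by_cases hxv : x = v
    · rw [withPart_of_mem (Set.mem_singleton_iff.mpr hxv)]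
      exact hvM.trans Set.subset_union_right
    rw [withPart_of_notMem (Set.notMem_singleton_iff.mpr hxv)]
    rcases hx with hx | hx
    · exact (pk.part_subset_closed x hx).trans Set.subset_union_left
    · have hxU := (Set.mem_insert_iff.mp (pk.merged_subset hdown hx)).resolve_left hxv
      exact (pk.part_subset_merged_of_mem hvU hdown hx hxU).trans Set.subset_union_right
  · have hxv : x ≠ v := fun h => hxb (Or.inr (by rw [h]; exact Set.mem_insert v _))
    rw [withPart_of_notMem (Set.notMem_singleton_iff.mpr hxv)]
    rcases hx with hx | hx
    · exact pk.isIsoNbhd x hx fun h => hxb (Or.inl h)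
    obtain ⟨u, hu, hxu⟩ := (pk.mem_merged.mp hx).resolve_left hxv
    have hlarge : S.small ≤ (pk.part u).ncard := by
      by_contra! h
      exact hxb (Or.inr (Set.mem_insert_of_mem v (Set.mem_biUnion ⟨hu, h⟩ hxu)))
    rw [pk.isPartition.eq_of_mem u (pk.openChildren_subset hdown hu) x hxu]
    exact pk.isIsoNbhd_part_of_mem_openChildren hadj hvU hdown hu hlarge hxu
  · have hxM : x ∉ pk.merged v := fun h => hxC (Or.inr h)
    rw [withPart_of_notMem fun h => hxM (hvM h)]
    exact pk.isOpenPart_of_notMem_merged hdown (pk.mem_of_notMem_merged hx hxM)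
      (fun h => hxC (Or.inl h)) hxM
  · refine potential_union (pk.closed_disjoint_merged hvU hdown) pk.potential
      ((Set.ncard_union_le _ _).trans (Nat.add_le_add_left (pk.ncard_splitBad_le hadj hdeg) _))
      (pk.ncard_outerChildren_compl_union_merged_le hvU hdown hpar) ?_
    have : (2 : ℝ) ≤ (outerChildren p (pk.merged v)).ncard := by exact_mod_cast hsplit
    have := S.rho_nonneg
    nlinarith [(Nat.cast_nonneg S.weight : (0 : ℝ) ≤ S.weight),
      (Nat.cast_nonneg (pk.merged v).ncard : (0 : ℝ) ≤ (pk.merged v).ncard)]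

lemma nonempty_extend [Finite V] (pk : Stage T p S U)
    (hadj : ∀ u w, T.Adj u w ↔ p u = some w ∨ p w = some u)
    (hdeg : ∀ v : V, (T.neighborSet v).ncard ≤ d) (hvU : v ∉ U)
    (hdown : ∀ x y, p x = some y → y ∈ insert v U → x ∈ U)
    (hpar : ∀ w, p v = some w → w ∉ insert v U) : Nonempty (Stage T p S (insert v U)) := by
  by_cases hsplit : 2 ≤ (outerChildren p (pk.merged v)).ncard
  · exact pk.nonempty_extend_of_split hadj hdeg hvU hdown hpar hsplit
  by_cases hclose : (outerChildren p (pk.merged v)).ncard = 0 ∧ S.large ≤ (pk.merged v).ncard ∨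
      (outerChildren p (pk.merged v)).ncard = 1 ∧ S.small ≤ (pk.merged v).ncard
  · exact pk.nonempty_extend_of_close hadj hdeg hvU hdown hpar hclose
  · exact pk.nonempty_extend_of_open hadj hdeg hvU hdown hpar (by omega)

lemma ncard_outerChildren_compl_union_part_le [Finite V] (pk : Stage T p S Set.univ) {v : V}
    (hv : v ∉ pk.closed) :
    ((outerChildren p (pk.closed ∪ pk.part v)ᶜ).ncard : ℝ) ≤
      (outerChildren p pk.closedᶜ).ncard - (outerChildren p (pk.part v)).ncard := by
  obtain ⟨m, htop⟩ := (pk.isOpenPart v trivial hv).1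
  have hE (x : V) (hx : x ∈ pk.part v) (w : V) (hw : p x = some w) :
      w ∈ pk.part v ∨ x ∈ (∅ : Set V) :=
    (htop.parent_mem hx hw).imp_right fun (h : x = m) => (htop.2.1 w (h ▸ hw) trivial).elim
  simpa using ncard_outerChildren_compl_union_le hE <| pk.outerChildren_subset
    (fun x => pk.notMem_closed_of_mem_part trivial hv)
    (fun x hx _ => (pk.isPartition.eq_of_mem v trivial x hx).le)
    (fun _ _ _ _ => trivial) fun _ _ _ _ h => absurd trivial h

lemma exists_closed_eq_union_part_of_bad (pk : Stage T p S Set.univ) {v : V} (bad : Set V)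
    (hbad : pk.bad ⊆ bad) (hbadC : bad ⊆ pk.closed ∪ pk.part v)
    (hiso : ∀ x ∈ pk.part v, x ∉ bad → IsIsoNbhd T x (pk.part v) k δ 2)
    (hpot : (bad.ncard : ℝ) + S.weight * (outerChildren p (pk.closed ∪ pk.part v)ᶜ).ncard ≤
      ρ * (pk.closed ∪ pk.part v).ncard) :
    ∃ pk' : Stage T p S Set.univ, pk'.closed = pk.closed ∪ pk.part v := by
  have hPeq {x : V} (hx : x ∈ pk.part v) : pk.part x = pk.part v :=
    pk.isPartition.eq_of_mem v trivial x hx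
  refine ⟨{
    part := pk.part
    closed := pk.closed ∪ pk.part v
    bad := bad
    isPartition := pk.isPartition
    closed_subset := Set.subset_univ _
    bad_subset := hbadC
    part_subset_closed := ?_
    isIsoNbhd := ?_
    isOpenPart := fun x hx hxC => pk.isOpenPart x hx fun h => hxC (Or.inl h)
    potential := hpot
  }, rfl⟩
  · rintro x (hx | hx)
    · exact (pk.part_subset_closed x hx).trans Set.subset_union_left
    · exact (hPeq hx).le.trans Set.subset_union_right
  · rintro x (hx | hx) hxb
    · exact pk.isIsoNbhd x hx fun h => hxb (hbad h)
    · exact hPeq hx ▸ hiso x hx hxb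

/-- At the end an open part hangs from a root; it is good if it has no outer child, and otherwise
its fewer than `small ≤ weight` vertices are paid for by the token below it. -/
lemma exists_closed_eq_union_part [Finite V] (pk : Stage T p S Set.univ)
    (hadj : ∀ u w, T.Adj u w ↔ p u = some w ∨ p w = some u) {v : V} (hv : v ∉ pk.closed) :
    ∃ pk' : Stage T p S Set.univ, pk'.closed = pk.closed ∪ pk.part v := by
  obtain ⟨⟨m, htop⟩, hsize⟩ := pk.isOpenPart v trivial hv
  have hCP : Disjoint pk.closed (pk.part v) :=
    Set.disjoint_right.mpr fun _ hx => pk.notMem_closed_of_mem_part trivial hv hx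
  have htok := pk.ncard_outerChildren_compl_union_part_le hv
  rw [← add_zero (_ - _)] at htok
  have hρ := S.rho_nonneg
  rcases hsize with ⟨hD, -⟩ | ⟨hD, hP⟩
  · refine pk.exists_closed_eq_union_part_of_bad pk.bad subset_rfl
      (pk.bad_subset.trans Set.subset_union_left) (fun x hx _ => ?_)
      (potential_union (b := 0) hCP pk.potential le_rfl htok (by rw [hD]; simp; positivity))
    have hcut : cutSet T (pk.part v) = ∅ := by
      have hsub := htop.cutSet_subset hadj
      rw [(Set.ncard_eq_zero).mp hD, Set.empty_union] at hsub
      exact Set.subset_empty_iff.mp (hsub.trans fun w hw => htop.2.1 w hw trivial)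
    exact isIsoNbhd_of_ncard_cutSet_le hx (pk.isPartition.connected v trivial)
      (le_trans (by exact_mod_cast pk.isPartition.ncard_le v trivial) S.one_add_mul_large_le)
      (by rw [hcut, Set.ncard_empty]) (by norm_num)
      (by rw [Nat.cast_zero]; exact mul_nonneg S.delta_pos.le (Nat.cast_nonneg _))
  · refine pk.exists_closed_eq_union_part_of_bad (pk.bad ∪ pk.part v) Set.subset_union_left
      (Set.union_subset_union pk.bad_subset subset_rfl) (fun x hx hxb => absurd (Or.inr hx) hxb)
      (potential_union hCP pk.potential (Set.ncard_union_le _ _) htok ?_)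
    have : ((pk.part v).ncard : ℝ) ≤ S.weight := by
      exact_mod_cast hP.le.trans S.small_le_weight
    rw [hD]
    push_cast
    linarith [mul_nonneg hρ (Nat.cast_nonneg (pk.part v).ncard)]

lemma exists_closed_eq_univ [Finite V] (hadj : ∀ u w, T.Adj u w ↔ p u = some w ∨ p w = some u)
    (pk : Stage T p S Set.univ) : ∃ pk' : Stage T p S Set.univ, pk'.closed = Set.univ := by
  induction h : pk.closedᶜ.ncard using Nat.strong_induction_on generalizing pk with
  | _ n ih =>
  by_cases hC : pk.closed = Set.univ
  · exact ⟨pk, hC⟩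
  obtain ⟨v, hv⟩ : ∃ v, v ∉ pk.closed := by
    by_contra! h'
    exact hC (Set.eq_univ_of_forall h')
  obtain ⟨pk', hpk'⟩ := pk.exists_closed_eq_union_part hadj hv
  have hlt : pk'.closedᶜ ⊂ pk.closedᶜ :=
    ssubset_of_subset_not_subset (Set.compl_subset_compl.mpr (hpk' ▸ Set.subset_union_left))
      fun h => h hv (hpk' ▸ Or.inr (pk.isPartition.mem_self v trivial))
  exact ih _ (h ▸ Set.ncard_lt_ncard hlt) pk' rfl

lemma ncard_bad_le [Fintype V] (pk : Stage T p S Set.univ) (h : pk.closed = Set.univ) :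
    (pk.bad.ncard : ℝ) ≤ ρ * Fintype.card V := by
  have := pk.potential
  simpa [h, outerChildren, Set.ncard_univ, Nat.card_eq_fintype_card] using this

end Stage

theorem nonempty_stage [Finite V] {T : SimpleGraph V} {p : V → Option V} {rank : V → ℕ} {d : ℕ}
    {δ ρ k : ℝ} (S : Scales d δ ρ k) (hadj : ∀ u w, T.Adj u w ↔ p u = some w ∨ p w = some u)
    (hrank : ∀ u w, p u = some w → rank w < rank u) (hdeg : ∀ v : V, (T.neighborSet v).ncard ≤ d)
    (U : Finset V) (hU : ∀ x y, p x = some y → y ∈ U → x ∈ U) : Nonempty (Stage T p S U) := by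
  classical
  induction U using Finset.strongInduction with
  | H U ih =>
  rcases U.eq_empty_or_nonempty with rfl | hne
  · simpa using Stage.nonempty_empty
  obtain ⟨v, hv, hmin⟩ := U.exists_min_image rank hne
  have hpar (w : V) (hw : p v = some w) : w ∉ U := fun hwU => (hrank v w hw).not_ge (hmin w hwU)
  have hdown (x y : V) (hxy : p x = some y) (hy : y ∈ insert v (U.erase v : Set V)) :
      x ∈ (U.erase v : Set V) := by
    have hyU : y ∈ U := by
      rcases Set.mem_insert_iff.mp hy with rfl | hy
      exacts [hv, Finset.mem_of_mem_erase hy]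
    exact Finset.mem_erase.mpr ⟨by rintro rfl; exact hpar y hxy hyU, hU x y hxy hyU⟩
  obtain ⟨pk⟩ := ih (U.erase v) (Finset.erase_ssubset hv)
    fun x y hxy hy => hdown x y hxy (Set.mem_insert_of_mem v hy)
  have := pk.nonempty_extend hadj hdeg (by simp) hdown fun w hw hwU => by
    rcases Set.mem_insert_iff.mp hwU with rfl | hwU
    · exact lt_irrefl _ (hrank _ _ hw)
    · exact hpar w hw (Finset.mem_of_mem_erase hwU)
  rwa [← Finset.coe_insert, Finset.insert_erase hv] at this

lemma one_sub_mul_card_le_ncard [Fintype V] {P : V → Prop} {B : Set V} {ρ : ℝ}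
    (hB : (B.ncard : ℝ) ≤ ρ * Fintype.card V) (hP : ∀ w ∉ B, P w) :
    (1 - ρ) * Fintype.card V ≤ ({w | P w}.ncard : ℝ) := by
  have hcompl : (Bᶜ.ncard : ℝ) ≤ {w | P w}.ncard := by exact_mod_cast Set.ncard_le_ncard hP
  have := Set.ncard_add_ncard_compl B
  rw [Nat.card_eq_fintype_card] at this
  have : (B.ncard : ℝ) + Bᶜ.ncard = Fintype.card V := by exact_mod_cast this
  linarith

end ForestPartition

open ForestPartition

/-- Lemma 2 of the paper: a strong partition for forests. For any finite
forest `T` with maximum degree at most `d ≥ 2` and `ε, δ ∈ (0, 1/2)`, with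
`k = 481·d²/(δε)`, there is a partition `f` of the vertices into connected parts of size at
most `k`, such that at least `(1 - ε/60)|V|` vertices `w` lie in a part `f(w)` that is a
`(k, δ, 2)`-isolated neighborhood of `w` in `T`. -/
theorem forest_strong_partition {V : Type} [Fintype V]
    (T : SimpleGraph V) (hacyclic : T.IsAcyclic)
    (d : ℕ) (hd : 2 ≤ d) (hdeg : ∀ v : V, (T.neighborSet v).ncard ≤ d)
    (ε δ : ℝ) (hε : ε ∈ Set.Ioo (0 : ℝ) (1/2)) (hδ : δ ∈ Set.Ioo (0 : ℝ) (1/2)) :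
    ∃ f : V → Set V,
      (∀ v : V, v ∈ f v) ∧
      (∀ v : V, ∀ w ∈ f v, f w = f v) ∧
      (∀ v : V, ((f v).ncard : ℝ) ≤ 481 * d ^ 2 / (δ * ε)) ∧
      (∀ v : V, (T.induce (f v)).Connected) ∧
      (1 - ε / 60) * (Fintype.card V : ℝ) ≤
        (({w : V | IsIsoNbhd T w (f w) (481 * d ^ 2 / (δ * ε)) δ 2}).ncard : ℝ) := by
  obtain ⟨p, rank, hadj, hrank⟩ := hacyclic.exists_parent_map
  obtain ⟨S⟩ := nonempty_scales (d := d) (by omega) hε.1 (by linarith [hε.2]) hδ.1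
    (by linarith [hδ.2])
  obtain ⟨pk⟩ := nonempty_stage S hadj hrank hdeg Finset.univ (by simp)
  rw [Finset.coe_univ] at pk
  obtain ⟨pk, hclosed⟩ := pk.exists_closed_eq_univ hadj
  have hpart := pk.isPartition
  refine ⟨pk.part, fun v => hpart.mem_self v trivial, fun v => hpart.eq_of_mem v trivial,
    fun v => le_trans (by exact_mod_cast hpart.ncard_le v trivial) S.one_add_mul_large_le,
    fun v => hpart.connected v trivial, ?_⟩
  exact one_sub_mul_card_le_ncard (pk.ncard_bad_le hclosed)
    fun w hw => pk.isIsoNbhd w (by rw [hclosed]; trivial) hw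
end

section
/- Let G = (V, E) be a finite simple graph with maximum degree bounded by d, and let (X, T) be an edge-overlapping and minimal tree decomposition of G of width h. Then the maximum degree of a node in the forest T is bounded by d·(h+1). -/
/-!
Fix a node `i` and a neighbour `j` of `i` in `T`, and a vertex `x` in both bags (edge overlap).
Among the bags containing `x` on `j`'s side of `i`, take one, `k`, farthest from `i`. Since `T` is
a forest, `k` is a leaf of the subtree of bags containing `x`, so erasing `x` from bag `k` keeps
that subtree connected; by minimality the erasure must therefore uncover an edge `xy` with `y` in
bag `k` and in no other bag together with `x`, in particular `y ∉ bags i`. The bags containing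
`y` form a subtree avoiding `i`, so `y` determines the side of `i`, hence `j`. This injects the
neighbours of `i` into the at most `d·(h+1)` graph-neighbours of vertices of `bags i`.
-/

/-- `(bags, T)` is a tree decomposition of `G`: `T` is a forest on the index set of the
family of bags; every vertex appears in some bag; every edge is contained in some bag;
and for every vertex the set of bags containing it induces a connected subgraph of `T`. -/
def IsTreeDecomposition {V : Type} {m : ℕ} (G : SimpleGraph V)
    (bags : Fin m → Finset V) (T : SimpleGraph (Fin m)) : Prop :=
  T.IsAcyclic ∧
  (∀ v : V, ∃ i, v ∈ bags i) ∧
  (∀ u v : V, G.Adj u v → ∃ i, u ∈ bags i ∧ v ∈ bags i) ∧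
  (∀ v : V, (T.induce {i : Fin m | v ∈ bags i}).Connected)

open SimpleGraph

namespace SimpleGraph

variable {α : Type*} {T : SimpleGraph α}

theorem Connected.exists_isPath_of_induce {s : Set α} (hs : (T.induce s).Connected) {a b : α}
    (ha : a ∈ s) (hb : b ∈ s) : ∃ p : T.Walk a b, p.IsPath ∧ ∀ x ∈ p.support, x ∈ s := by
  classical
  obtain ⟨q⟩ := hs.preconnected ⟨a, ha⟩ ⟨b, hb⟩
  refine ⟨q.bypass.map (Embedding.induce s).toHom,
    q.bypass_isPath.map (Embedding.induce (G := T) s).injective, fun x hx => ?_⟩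
  erw [Walk.support_map, List.mem_map] at hx
  obtain ⟨⟨y, hy⟩, -, rfl⟩ := hx
  exact hy

theorem IsAcyclic.length_eq_dist (hT : T.IsAcyclic) {u v : α} {p : T.Walk u v}
    (hp : p.IsPath) : p.length = T.dist u v := by
  obtain ⟨q, hq, hlen⟩ := p.reachable.exists_path_of_dist
  rw [← hlen, Subtype.mk.inj ((hT.subsingleton_path u v).elim ⟨p, hp⟩ ⟨q, hq⟩)]

theorem IsAcyclic.dist_getVert (hT : T.IsAcyclic) {u v : α} {p : T.Walk u v} (hp : p.IsPath)
    {n : ℕ} (hn : n ≤ p.length) : T.dist u (p.getVert n) = n := by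
  rw [← hT.length_eq_dist (hp.take n), Walk.take_length]
  omega

/-- Such a `k` is a leaf of the subtree `s`: a path in `s` from `i` passing through `k` would
continue to a neighbour of `k` farther from `i`. -/
theorem IsAcyclic.connected_induce_diff_singleton (hT : T.IsAcyclic) {s : Set α}
    (hs : (T.induce s).Connected) {i k : α} (hi : i ∈ s) (hki : k ≠ i)
    (hfar : ∀ k', T.Adj k k' → k' ∈ s → T.dist i k' ≤ T.dist i k) :
    (T.induce (s \ {k})).Connected := by
  rw [connected_iff_exists_forall_reachable]
  refine ⟨⟨i, hi, hki.symm⟩, fun ⟨l, hl⟩ => ?_⟩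
  obtain ⟨p, hp, hps⟩ := hs.exists_isPath_of_induce hi hl.1
  refine ⟨p.induce (s \ {k}) fun x hx => ⟨hps x hx, ?_⟩⟩
  rintro rfl
  obtain ⟨n, rfl, hn⟩ := Walk.mem_support_iff_exists_getVert.mp hx
  have hlt : n < p.length :=
    hn.lt_of_ne fun h => hl.2 (by rw [h, Walk.getVert_length]; rfl)
  have := hfar _ (p.adj_getVert_succ hlt) (hps _ (p.getVert_mem_support _))
  rw [hT.dist_getVert hp hlt, hT.dist_getVert hp hn] at this
  omega

theorem IsAcyclic.eq_of_adj_of_walk_avoiding (hT : T.IsAcyclic) {i j j' : α} (hij : T.Adj i j)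
    (hij' : T.Adj i j') (w : T.Walk j j') (hw : i ∉ w.support) : j = j' := by
  have hbridge := isBridge_iff_forall_walk_mem_edges.mp
    (isAcyclic_iff_forall_adj_isBridge.mp hT hij.symm) (w.concat hij'.symm)
  rw [Walk.edges_concat, List.concat_eq_append, List.mem_append, List.mem_singleton] at hbridge
  rcases hbridge with h | h
  · exact absurd (w.snd_mem_support_of_mem_edges h) hw
  · exact Sym2.congr_left.mp h

end SimpleGraph

theorem Finset.mem_update_erase_iff {ι β : Type*} [DecidableEq ι] [DecidableEq β]
    (f : ι → Finset β) (k : ι) (x v : β) (l : ι) :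
    v ∈ Function.update f k ((f k).erase x) l ↔ v ∈ f l ∧ (l = k → v ≠ x) := by
  by_cases hlk : l = k
  · subst hlk
    simp [and_comm]
  · simp [hlk]

namespace IsTreeDecomposition

variable {V : Type} {m : ℕ} {G : SimpleGraph V} {bags : Fin m → Finset V}
  {T : SimpleGraph (Fin m)}

theorem update_erase [DecidableEq V] (htd : IsTreeDecomposition G bags T) {k : Fin m} {x : V}
    (hconn : (T.induce ({l | x ∈ bags l} \ {k})).Connected)
    (hedge : ∀ y, G.Adj x y → y ∈ bags k → ∃ l ≠ k, x ∈ bags l ∧ y ∈ bags l) :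
    IsTreeDecomposition G (Function.update bags k ((bags k).erase x)) T := by
  obtain ⟨hT, hcover, hedges, hconns⟩ := htd
  simp only [IsTreeDecomposition, Finset.mem_update_erase_iff]
  refine ⟨hT, fun v => ?_, fun u v huv => ?_, fun v => ?_⟩
  · by_cases hvx : v = x
    · obtain ⟨⟨l, hxl, hlk⟩⟩ := hconn.nonempty
      exact ⟨l, hvx ▸ hxl, fun h => absurd h hlk⟩
    · obtain ⟨l, hl⟩ := hcover v
      exact ⟨l, hl, fun _ => hvx⟩
  · obtain ⟨l, hul, hvl⟩ := hedges u v huv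
    by_cases hlk : l = k
    · subst hlk
      by_cases hux : u = x
      · obtain ⟨l', hl'k, hxl', hvl'⟩ := hedge v (hux ▸ huv) hvl
        exact ⟨l', ⟨hux ▸ hxl', fun h => absurd h hl'k⟩, hvl', fun h => absurd h hl'k⟩
      by_cases hvx : v = x
      · obtain ⟨l', hl'k, hxl', hul'⟩ := hedge u (hvx ▸ huv.symm) hul
        exact ⟨l', ⟨hul', fun h => absurd h hl'k⟩, hvx ▸ hxl', fun h => absurd h hl'k⟩
      exact ⟨l, ⟨hul, fun _ => hux⟩, hvl, fun _ => hvx⟩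
    · exact ⟨l, ⟨hul, fun h => absurd h hlk⟩, hvl, fun h => absurd h hlk⟩
  · by_cases hvx : v = x
    · subst hvx
      rwa [show {l | v ∈ Function.update bags k ((bags k).erase v) l} = {l | v ∈ bags l} \ {k}
        from Set.ext fun l => by simp [Finset.mem_update_erase_iff, and_comm]]
    · rw [show {l | v ∈ Function.update bags k ((bags k).erase x) l} = {l | v ∈ bags l}
        from Set.ext fun l => by simp [Finset.mem_update_erase_iff, hvx]]
      exact hconns v

theorem exists_adj_notMem_of_minimal [DecidableEq V] (htd : IsTreeDecomposition G bags T)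
    (hminimal : ∀ i : Fin m, ∀ x ∈ bags i,
      ¬ IsTreeDecomposition G (Function.update bags i ((bags i).erase x)) T)
    {i j : Fin m} (hij : T.Adj i j) {x : V} (hxi : x ∈ bags i) (hxj : x ∈ bags j) :
    ∃ y, G.Adj x y ∧ y ∉ bags i ∧ ∃ k, y ∈ bags k ∧ ∃ w : T.Walk j k, i ∉ w.support := by
  obtain ⟨k, ⟨hxk, w, hw⟩, hkmax⟩ :=
    Set.exists_max_image {k | x ∈ bags k ∧ ∃ w : T.Walk j k, i ∉ w.support} (T.dist i)
      (Set.toFinite _) ⟨j, hxj, .nil, by simpa using hij.ne⟩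
  have hki : k ≠ i := by
    rintro rfl
    exact hw w.end_mem_support
  have hfar : ∀ k', T.Adj k k' → x ∈ bags k' → T.dist i k' ≤ T.dist i k := by
    intro k' hkk' hxk'
    by_cases hk'i : k' = i
    · simp [hk'i]
    · exact hkmax k' ⟨hxk', w.concat hkk', by simp [Walk.support_concat, hw, Ne.symm hk'i]⟩
  have hconn := htd.1.connected_induce_diff_singleton (htd.2.2.2 x) hxi hki hfar
  by_contra! hno
  refine hminimal k x hxk (htd.update_erase hconn fun y hxy hyk => ?_)
  by_cases hyi : y ∈ bags i
  · exact ⟨i, hki.symm, hxi, hyi⟩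
  · exact absurd (hno y hxy hyi k hyk w) hw

theorem eq_of_sides_share_vertex (htd : IsTreeDecomposition G bags T) {i j j' k k' : Fin m}
    (hij : T.Adj i j) (hij' : T.Adj i j') {y : V} (hyi : y ∉ bags i) (hyk : y ∈ bags k)
    (hyk' : y ∈ bags k') (w : T.Walk j k) (hw : i ∉ w.support) (w' : T.Walk j' k')
    (hw' : i ∉ w'.support) : j = j' := by
  obtain ⟨p, -, hp⟩ := (htd.2.2.2 y).exists_isPath_of_induce hyk hyk'
  have hip : i ∉ p.support := fun hi => hyi (hp i hi)
  refine htd.1.eq_of_adj_of_walk_avoiding hij hij' ((w.append p).append w'.reverse) ?_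
  simp [Walk.mem_support_append_iff, hw, hw', hip]

end IsTreeDecomposition

/-- Lemma 5 of the paper: if `G` has maximum degree at most `d` and
`(bags, T)` is an edge-overlapping and minimal tree decomposition of `G` of width at most
`h`, then every node of the forest `T` has degree at most `d·(h+1)` in `T`. -/
theorem tree_decomposition_degree_bound {V : Type} [Fintype V] [DecidableEq V]
    (G : SimpleGraph V) (d h m : ℕ)
    (hdeg : ∀ v : V, (G.neighborSet v).ncard ≤ d)
    (bags : Fin m → Finset V) (T : SimpleGraph (Fin m))
    (htd : IsTreeDecomposition G bags T)
    (hwidth : ∀ i, (bags i).card ≤ h + 1)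
    (hoverlap : ∀ i j : Fin m, T.Adj i j → ((bags i : Set V) ∩ (bags j : Set V)).Nonempty)
    (hminimal : ∀ i : Fin m, ∀ x ∈ bags i,
      ¬ IsTreeDecomposition G (Function.update bags i ((bags i).erase x)) T) :
    ∀ i : Fin m, (T.neighborSet i).ncard ≤ d * (h + 1) := by
  intro i
  rcases (T.neighborSet i).eq_empty_or_nonempty with hempty | ⟨j₀, hj₀⟩
  · simp [hempty]
  have : Nonempty V := ⟨(hoverlap i j₀ hj₀).some⟩
  have hprivate : ∀ j ∈ T.neighborSet i, ∃ y ∈ ⋃ x ∈ bags i, G.neighborSet x,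
      y ∉ bags i ∧ ∃ k, y ∈ bags k ∧ ∃ w : T.Walk j k, i ∉ w.support := by
    intro j hj
    obtain ⟨x, hxi, hxj⟩ := hoverlap i j hj
    obtain ⟨y, hxy, hyi, hy⟩ := htd.exists_adj_notMem_of_minimal hminimal hj hxi hxj
    exact ⟨y, Set.mem_biUnion hxi hxy, hyi, hy⟩
  choose! f hfN hfi hf using hprivate
  have hinj : Set.InjOn f (T.neighborSet i) := by
    intro j hj j' hj' hjj'
    obtain ⟨k, hk, w, hw⟩ := hf j hj
    obtain ⟨k', hk', w', hw'⟩ := hf j' hj'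
    exact htd.eq_of_sides_share_vertex hj hj' (hfi j hj) hk (hjj' ▸ hk') w hw w' hw'
  calc (T.neighborSet i).ncard
      ≤ (⋃ x ∈ bags i, G.neighborSet x).ncard :=
        Set.ncard_le_ncard_of_injOn f hfN hinj (Set.toFinite _)
    _ ≤ ∑ x ∈ bags i, (G.neighborSet x).ncard := Finset.set_ncard_biUnion_le _ _
    _ ≤ (bags i).card • d := Finset.sum_le_card_nsmul _ _ _ fun x _ => hdeg x
    _ ≤ d * (h + 1) := by rw [smul_eq_mul, mul_comm]; exact Nat.mul_le_mul_left d (hwidth i)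
end

section
/- Let G = (V, E) be a finite simple graph, let v ∈ V, and let A be a family of isolated neighborhoods of v (i.e., each S ∈ A contains v, induces a connected subgraph of G, and satisfies η(S) ≤ c for an integer c ≥ 0). Then there exists a cover B ⊆ A of A with |B| ≤ (c+1)!. -/
/-!
Induction on `c`. Take `S ∈ A` maximal under inclusion. A member `T ∈ A` with a vertex outside `S`
does not contain `S`; as `S` is connected and meets `T` in `v`, some vertex of `N(T)` lies in `S`.
Hence, in `G - S`, the component of `T \ S` at a vertex `u ∈ N(S)` is a neighborhood of `u` of
cut-size at most `c - 1`. Every vertex of `T \ S` lies in such a component, because a path in `T`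
from it to `v` enters `S` through `N(S)`. Covering these components by induction, for each of the
at most `c` vertices of `N(S)`, and adding `S` gives a cover of size `1 + c * c! ≤ (c + 1)!`.
-/

theorem Set.ncard_biUnion_le_mul {ι α : Type*} {N : Set ι} (hN : N.Finite) {s : ι → Set α}
    {m : ℕ} (h : ∀ i ∈ N, (s i).ncard ≤ m) : (⋃ i ∈ N, s i).ncard ≤ N.ncard * m := by
  have hsum := hN.toFinset.set_ncard_biUnion_le s
  simp only [Set.Finite.mem_toFinset] at hsum
  calc _ ≤ ∑ i ∈ hN.toFinset, (s i).ncard := hsum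
    _ ≤ hN.toFinset.card • m := Finset.sum_le_card_nsmul _ _ _ (by simpa using h)
    _ = N.ncard * m := by rw [smul_eq_mul, Set.ncard_eq_toFinset_card N hN]

theorem Set.ncard_insert_biUnion_le_factorial {ι α : Type*} (a : α) {N : Set ι} (hN : N.Finite)
    {s : ι → Set α} {c : ℕ} (hNc : N.ncard ≤ c + 1)
    (hs : ∀ i ∈ N, (s i).ncard ≤ (c + 1).factorial) :
    (insert a (⋃ i ∈ N, s i)).ncard ≤ (c + 2).factorial :=
  calc (insert a (⋃ i ∈ N, s i)).ncard
      ≤ (⋃ i ∈ N, s i).ncard + 1 := Set.ncard_insert_le _ _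
    _ ≤ (c + 1) * (c + 1).factorial + 1 := by
      gcongr
      exact (Set.ncard_biUnion_le_mul hN hs).trans (Nat.mul_le_mul_right _ hNc)
    _ ≤ (c + 2).factorial := by
      rw [Nat.factorial_succ (c + 1)]
      nlinarith [Nat.factorial_pos (c + 1)]

namespace SimpleGraph

variable {V : Type} (G : SimpleGraph V)

def IsIsolatedNbhd (c : ℕ) (v : V) (S : Set V) : Prop :=
  v ∈ S ∧ (G.induce S).Connected ∧ (cutSet G S).ncard ≤ c

/-- `G - S`, keeping the vertices of `S` (now isolated) so that the vertex type stays `V`. -/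
def isolate (S : Set V) : SimpleGraph V where
  Adj a b := G.Adj a b ∧ a ∉ S ∧ b ∉ S
  symm := ⟨fun _ _ h => ⟨h.1.symm, h.2.2, h.2.1⟩⟩
  loopless := ⟨fun a h => G.loopless.irrefl a h.1⟩

theorem induce_isolate_of_subset_compl {S K : Set V} (hK : K ⊆ Sᶜ) :
    (G.isolate S).induce K = G.induce K := by
  ext a b
  exact and_iff_left ⟨hK a.2, hK b.2⟩

def componentIn (W : Set V) (u : V) : Set V :=
  ⋃₀ {K | u ∈ K ∧ K ⊆ W ∧ (G.induce K).Connected}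

variable {G}

theorem componentIn_subset (W : Set V) (u : V) : G.componentIn W u ⊆ W :=
  Set.sUnion_subset fun _ hK => hK.2.1

theorem mem_componentIn_self {W : Set V} {u : V} (hu : u ∈ W) : u ∈ G.componentIn W u := by
  have : Nonempty ({u} : Set V) := ⟨⟨u, rfl⟩⟩
  exact ⟨{u}, ⟨rfl, Set.singleton_subset_iff.2 hu, .of_subsingleton⟩, rfl⟩

theorem mem_componentIn_comm {W : Set V} {u x : V} :
    x ∈ G.componentIn W u ↔ u ∈ G.componentIn W x :=
  ⟨fun ⟨K, ⟨huK, hKW, hK⟩, hxK⟩ => ⟨K, ⟨hxK, hKW, hK⟩, huK⟩,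
    fun ⟨K, ⟨hxK, hKW, hK⟩, huK⟩ => ⟨K, ⟨huK, hKW, hK⟩, hxK⟩⟩

theorem mem_componentIn_of_adj {W : Set V} {u a b : V} (ha : a ∈ G.componentIn W u)
    (hb : b ∈ W) (hab : G.Adj a b) : b ∈ G.componentIn W u := by
  obtain ⟨K, ⟨huK, hKW, hK⟩, haK⟩ := ha
  refine ⟨K ∪ {a, b}, ⟨Or.inl huK, Set.union_subset hKW ?_, ?_⟩, Or.inr (by simp)⟩
  · exact Set.insert_subset (hKW haK) (Set.singleton_subset_iff.2 hb)
  · exact induce_union_connected hK.preconnected (induce_pair_connected_of_adj hab).preconnected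
      ⟨a, haK, by simp⟩

theorem connected_induce_componentIn {W : Set V} {u : V} (hu : u ∈ W) :
    (G.induce (G.componentIn W u)).Connected :=
  induce_sUnion_connected_of_pairwise_not_disjoint ⟨_, (mem_componentIn_self hu).choose_spec.1⟩
    (fun hs ht => ⟨u, hs.1, ht.1⟩) (fun hs => hs.2.2)

theorem exists_adj_of_connected_induce {T C : Set V} (hT : (G.induce T).Connected) {x y : V}
    (hxT : x ∈ T) (hyT : y ∈ T) (hxC : x ∈ C) (hyC : y ∉ C) :
    ∃ a ∈ T ∩ C, ∃ b ∈ T \ C, G.Adj a b := by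
  obtain ⟨d, -, hd₁, hd₂⟩ :=
    (hT.preconnected ⟨x, hxT⟩ ⟨y, hyT⟩).some.exists_boundary_dart (Subtype.val ⁻¹' C) hxC hyC
  exact ⟨d.fst, ⟨d.fst.2, hd₁⟩, d.snd, ⟨d.snd.2, hd₂⟩, d.adj⟩

theorem subset_union_biUnion_componentIn {S T : Set V} {v : V} (hT : (G.induce T).Connected)
    (hvT : v ∈ T) (hvS : v ∈ S) : T ⊆ S ∪ ⋃ a ∈ cutSet G S, G.componentIn (T \ S) a := by
  intro x hxT
  by_cases hxS : x ∈ S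
  · exact Or.inl hxS
  have hxC : x ∈ G.componentIn (T \ S) x := mem_componentIn_self ⟨hxT, hxS⟩
  obtain ⟨a, ⟨-, haC⟩, b, ⟨hbT, hbC⟩, hab⟩ := exists_adj_of_connected_induce hT hxT hvT hxC
    fun hvC => (componentIn_subset _ _ hvC).2 hvS
  have hbS : b ∈ S := by_contra fun hbS => hbC (mem_componentIn_of_adj haC ⟨hbT, hbS⟩ hab)
  exact Or.inr (Set.mem_biUnion ⟨(componentIn_subset _ _ haC).2, b, hbS, hab.symm⟩
    (mem_componentIn_comm.1 haC))

theorem cutSet_isolate_componentIn_subset (S T : Set V) (u : V) :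
    cutSet (G.isolate S) (G.componentIn (T \ S) u) ⊆ cutSet G T \ S := by
  rintro w ⟨hwC, y, hyC, hyw, -, hwS⟩
  exact ⟨⟨fun hwT => hwC (mem_componentIn_of_adj hyC ⟨hwT, hwS⟩ hyw), y,
    (componentIn_subset _ _ hyC).1, hyw⟩, hwS⟩

theorem ncard_cutSet_diff_lt [Finite V] {S T : Set V} {v : V} (hS : (G.induce S).Connected)
    (hvS : v ∈ S) (hvT : v ∈ T) (hST : ¬S ⊆ T) :
    (cutSet G T \ S).ncard < (cutSet G T).ncard := by
  obtain ⟨w, hwS, hwT⟩ := Set.not_subset.1 hST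
  obtain ⟨a, ⟨-, haT⟩, b, ⟨hbS, hbT⟩, hab⟩ := exists_adj_of_connected_induce hS hvS hwS hvT hwT
  exact Set.ncard_lt_ncard (Set.sdiff_ssubset_left_iff.2 ⟨b, ⟨hbT, a, haT, hab⟩, hbS⟩)

theorem isIsolatedNbhd_componentIn [Finite V] {c : ℕ} {v u : V} {S T : Set V}
    (hS : (G.induce S).Connected) (hvS : v ∈ S) (hT : G.IsIsolatedNbhd (c + 1) v T)
    (hST : ¬S ⊆ T) (hu : u ∈ T \ S) :
    (G.isolate S).IsIsolatedNbhd c u (G.componentIn (T \ S) u) := by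
  refine ⟨mem_componentIn_self hu, ?_, ?_⟩
  · rw [induce_isolate_of_subset_compl _ fun x hx => (componentIn_subset _ _ hx).2]
    exact connected_induce_componentIn hu
  · refine Nat.lt_succ_iff.1 ?_
    calc (cutSet (G.isolate S) (G.componentIn (T \ S) u)).ncard
        ≤ (cutSet G T \ S).ncard := Set.ncard_le_ncard (cutSet_isolate_componentIn_subset S T u)
      _ < (cutSet G T).ncard := ncard_cutSet_diff_lt hS hvS hT.1 hST
      _ ≤ c + 1 := hT.2.2

/-- Indexing lets the cover of the components of `T \ S` be read back as a subfamily of `A`. -/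
theorem exists_small_cover [Finite V] {ι : Type*} [Finite ι] {c : ℕ} {v : V} {I : Set ι}
    {F : ι → Set V} (hF : ∀ i ∈ I, G.IsIsolatedNbhd c v (F i)) :
    ∃ J ⊆ I, J.ncard ≤ (c + 1).factorial ∧ ∀ i ∈ I, F i ⊆ ⋃ j ∈ J, F j := by
  induction c generalizing G v I F with
  | zero =>
    rcases I.eq_empty_or_nonempty with rfl | ⟨i₀, hi₀⟩
    · exact ⟨∅, by simp⟩
    refine ⟨{i₀}, by simpa, by simp, fun i hi => ?_⟩
    have hcut : cutSet G (F i₀) = ∅ :=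
      (Set.ncard_eq_zero (Set.toFinite _)).1 (Nat.le_zero.1 (hF i₀ hi₀).2.2)
    simpa [hcut] using subset_union_biUnion_componentIn (hF i hi).2.1 (hF i hi).1 (hF i₀ hi₀).1
  | succ c ih =>
    rcases I.eq_empty_or_nonempty with rfl | hI
    · exact ⟨∅, by simp⟩
    obtain ⟨i₀, hi₀, hmax⟩ := Set.Finite.exists_maximalFor F I (Set.toFinite I) hI
    obtain ⟨hvS, hS, hcutS⟩ := hF i₀ hi₀
    set S := F i₀
    have hcover (u : V) (hu : u ∈ cutSet G S) : ∃ J ⊆ {i ∈ I | u ∈ F i},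
        J.ncard ≤ (c + 1).factorial ∧ ∀ i ∈ {i ∈ I | u ∈ F i},
          G.componentIn (F i \ S) u ⊆ ⋃ j ∈ J, G.componentIn (F j \ S) u :=
      ih (G := G.isolate S) (F := fun i => G.componentIn (F i \ S) u) fun i hi =>
        isIsolatedNbhd_componentIn hS hvS (hF i hi.1) (fun h => hu.1 (hmax hi.1 h hi.2))
          ⟨hi.2, hu.1⟩
    choose! J hJI hJcard hJcover using hcover
    refine ⟨insert i₀ (⋃ u ∈ cutSet G S, J u), ?_, ?_, ?_⟩
    · exact Set.insert_subset hi₀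
        (Set.iUnion₂_subset fun u hu => (hJI u hu).trans (Set.sep_subset _ _))
    · exact Set.ncard_insert_biUnion_le_factorial i₀ (Set.toFinite _) hcutS hJcard
    · intro i hi x hx
      rcases subset_union_biUnion_componentIn (hF i hi).2.1 (hF i hi).1 hvS hx with hxS | hxC
      · exact Set.mem_biUnion (Set.mem_insert _ _) hxS
      obtain ⟨u, hu, hxu⟩ := Set.mem_iUnion₂.1 hxC
      obtain ⟨j, hj, hxj⟩ := Set.mem_iUnion₂.1
        (hJcover u hu i ⟨hi, (componentIn_subset _ _ (mem_componentIn_comm.1 hxu)).1⟩ hxu)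
      exact Set.mem_biUnion (Set.mem_insert_of_mem _ (Set.mem_biUnion hu hj))
        (componentIn_subset _ _ hxj).1

end SimpleGraph

/-- Lemma 8 of the paper: small cover of isolated neighborhoods. If `A`
is a family of neighborhoods of a vertex `v` (sets containing `v` that induce connected
subgraphs), each of cut-size at most `c`, then `A` has a cover `B ⊆ A` of size at most
`(c+1)!`, i.e. every member of `A` is contained in the union of the members of `B`. -/
theorem small_cover_of_isolated_neighborhoods {V : Type} [Fintype V]
    (G : SimpleGraph V) (v : V) (c : ℕ) (A : Set (Set V))
    (hA : ∀ S ∈ A, v ∈ S ∧ (G.induce S).Connected ∧ (cutSet G S).ncard ≤ c) :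
    ∃ B ⊆ A, B.ncard ≤ (c + 1).factorial ∧ ∀ T ∈ A, T ⊆ ⋃₀ B := by
  obtain ⟨B, hBA, hBcard, hBcover⟩ := SimpleGraph.exists_small_cover (F := id) hA
  exact ⟨B, hBA, hBcard, fun T hT => Set.sUnion_eq_biUnion ▸ hBcover T hT⟩
end

section
/- Let G = (V, E) be a finite simple graph, let v ∈ V, let k, c ≥ 1 be integers and δ ∈ (0,1). Then the union of all (k, δ, c)-isolated neighborhoods of v in G has size at most k·(c+1)!. In particular, the number of vertices u for which there exists a (k, δ, c)-isolated neighborhood of u containing v is at most k·(c+1)!. -/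
lemma Set.ncard_biUnion_le_ncard_mul_s6 {ι α : Type*} {t : Set ι} (ht : t.Finite)
    (s : ι → Set α) {n : ℕ} (hs : ∀ i ∈ t, (s i).ncard ≤ n) :
    (⋃ i ∈ t, s i).ncard ≤ t.ncard * n := by
  rw [Set.ncard_eq_toFinset_card t ht, ← smul_eq_mul]
  simpa using (ht.toFinset.set_ncard_biUnion_le s).trans
    (Finset.sum_le_card_nsmul _ _ n fun i hi => hs i (ht.mem_toFinset.mp hi))

lemma Nat.add_succ_mul_factorial_le (k c : ℕ) :
    k + (c + 1) * (k * (c + 1).factorial) ≤ k * (c + 2).factorial := by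
  have : 1 ≤ (c + 1).factorial := (c + 1).factorial_pos
  rw [Nat.factorial_succ (c + 1)]
  nlinarith

namespace SimpleGraph

variable {V : Type} {G : SimpleGraph V}

lemma subset_of_disjoint_cutSet {S T : Set V} {v : V} (hS : (G.induce S).Connected)
    (hvS : v ∈ S) (hvT : v ∈ T) (hST : Disjoint S (cutSet G T)) : S ⊆ T := by
  intro x hxS
  by_contra hxT
  obtain ⟨p⟩ := hS.preconnected ⟨v, hvS⟩ ⟨x, hxS⟩
  obtain ⟨d, -, hd₁, hd₂⟩ := p.exists_boundary_dart {y | y.1 ∈ T} hvT hxT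
  exact hST.ne_of_mem d.snd.2 ⟨hd₂, d.fst, hd₁, d.adj⟩ rfl

lemma cutSet_diff_subset (T M : Set V) : cutSet G (T \ M) ⊆ cutSet G T ∪ M := by
  rintro x ⟨hx, y, ⟨hyT, -⟩, hyx⟩
  by_cases hxT : x ∈ T
  · exact Or.inr (by_contra fun hxM => hx ⟨hxT, hxM⟩)
  · exact Or.inl ⟨hxT, y, hyT, hyx⟩

lemma induce_singleton_connected (u : V) : (G.induce {u}).Connected :=
  connected_iff _ |>.mpr ⟨Preconnected.of_subsingleton, inferInstance⟩

def inducedComponent (G : SimpleGraph V) (A : Set V) (u : V) : Set V :=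
  ⋃₀ {s | s ⊆ A ∧ u ∈ s ∧ (G.induce s).Connected}

lemma inducedComponent_subset (A : Set V) (u : V) : G.inducedComponent A u ⊆ A :=
  Set.sUnion_subset fun _ hs => hs.1

lemma mem_inducedComponent {A : Set V} {u : V} (hu : u ∈ A) : u ∈ G.inducedComponent A u :=
  ⟨{u}, ⟨Set.singleton_subset_iff.mpr hu, rfl, induce_singleton_connected u⟩, rfl⟩

lemma mem_inducedComponent_of_adj {A : Set V} {u x y : V} (hy : y ∈ G.inducedComponent A u)
    (hx : x ∈ A) (hyx : G.Adj y x) : x ∈ G.inducedComponent A u := by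
  obtain ⟨s, ⟨hsA, hus, hs⟩, hys⟩ := hy
  refine ⟨s ∪ {x}, ⟨Set.union_subset hsA (Set.singleton_subset_iff.mpr hx), Or.inl hus, ?_⟩,
    Or.inr rfl⟩
  exact connected_induce_union hs.preconnected (induce_singleton_connected x).preconnected
    hys rfl hyx

lemma inducedComponent_connected {A : Set V} {u : V} (hu : u ∈ A) :
    (G.induce (G.inducedComponent A u)).Connected :=
  induce_sUnion_connected_of_pairwise_not_disjoint ⟨{u}, Set.singleton_subset_iff.mpr hu, rfl,
      induce_singleton_connected u⟩
    (fun hs ht => ⟨u, hs.2.1, ht.2.1⟩) fun hs => hs.2.2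

lemma cutSet_inducedComponent_subset (A : Set V) (u : V) :
    cutSet G (G.inducedComponent A u) ⊆ cutSet G A := by
  rintro x ⟨hx, y, hy, hyx⟩
  exact ⟨fun hxA => hx (mem_inducedComponent_of_adj hy hxA hyx), y,
    inducedComponent_subset A u hy, hyx⟩

lemma exists_mem_inducedComponent_mem_cutSet {T M : Set V} {u v : V}
    (hT : (G.induce T).Connected) (hu : u ∈ T \ M) (hvT : v ∈ T) (hvM : v ∈ M) :
    ∃ a ∈ G.inducedComponent (T \ M) u, a ∈ cutSet G M := by
  set P := G.inducedComponent (T \ M) u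
  have hv : v ∉ P := fun hvP => (inducedComponent_subset _ u hvP).2 hvM
  obtain ⟨x, hxT, hx, y, hyP, hyx⟩ : (T ∩ cutSet G P).Nonempty := by
    by_contra! h
    exact hv (subset_of_disjoint_cutSet hT hu.1 (mem_inducedComponent hu)
      (Set.disjoint_iff_inter_eq_empty.mpr h) hvT)
  have hxM : x ∈ M := by_contra fun hxM => hx (mem_inducedComponent_of_adj hyP ⟨hxT, hxM⟩ hyx)
  exact ⟨y, hyP, (inducedComponent_subset _ u hyP).2, x, hxM, hyx.symm⟩

def boundedNbhds (G : SimpleGraph V) (k c : ℕ) (F : Set V) (v : V) : Set (Set V) :=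
  {S | v ∈ S ∧ Disjoint S F ∧ (G.induce S).Connected ∧ S.ncard ≤ k ∧ (cutSet G S \ F).ncard ≤ c}

variable [Finite V] {k c : ℕ} {F : Set V} {v : V}

lemma sUnion_boundedNbhds_zero_subset {S₀ : Set V} (hS₀ : S₀ ∈ G.boundedNbhds k 0 F v) :
    ⋃₀ G.boundedNbhds k 0 F v ⊆ S₀ := by
  refine Set.sUnion_subset fun T hT => subset_of_disjoint_cutSet hT.2.2.1 hT.1 hS₀.1 ?_
  have hcut : cutSet G S₀ ⊆ F :=
    Set.sdiff_eq_empty.mp ((Set.ncard_eq_zero).mp (Nat.le_zero.mp hS₀.2.2.2.2))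
  exact hT.2.1.mono_right hcut

lemma inter_cutSet_nonempty_of_ne {M T : Set V} (hM : (G.induce M).Connected) (hvM : v ∈ M)
    (hvT : v ∈ T) (hTM : T.ncard ≤ M.ncard) (hne : T ≠ M) : (M ∩ cutSet G T).Nonempty := by
  by_contra! h
  have hMT := subset_of_disjoint_cutSet hM hvM hvT (Set.disjoint_iff_inter_eq_empty.mpr h)
  exact hne (Set.eq_of_subset_of_ncard_le hMT hTM).symm

lemma exists_inducedComponent_mem_boundedNbhds {M T : Set V} {u : V}
    (hM : M ∈ G.boundedNbhds k (c + 1) F v)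
    (hMmax : ∀ S ∈ G.boundedNbhds k (c + 1) F v, S.ncard ≤ M.ncard)
    (hT : T ∈ G.boundedNbhds k (c + 1) F v) (hu : u ∈ T \ M) :
    ∃ a ∈ cutSet G M \ F, G.inducedComponent (T \ M) u ∈ G.boundedNbhds k c (F ∪ M) a := by
  obtain ⟨hvM, hMF, hMconn, -, -⟩ := hM
  obtain ⟨b, hbM, hbT⟩ := inter_cutSet_nonempty_of_ne hMconn hvM hT.1 (hMmax T hT)
    fun hTM => hu.2 (hTM ▸ hu.1)
  obtain ⟨hvT, hTF, hTconn, hTk, hTcut⟩ := hT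
  set P := G.inducedComponent (T \ M) u
  have hPT : P ⊆ T \ M := inducedComponent_subset _ u
  obtain ⟨a, haP, haM⟩ := exists_mem_inducedComponent_mem_cutSet hTconn hu hvT hvM
  have hPdisj : Disjoint P (F ∪ M) := Set.disjoint_union_right.mpr
    ⟨hTF.mono_left fun x hx => (hPT hx).1, Set.disjoint_left.mpr fun x hx => (hPT hx).2⟩
  have hPk : P.ncard ≤ k := (Set.ncard_le_ncard fun x hx => (hPT hx).1).trans hTk
  -- `b` is a boundary vertex of `T` outside `F` that `P` no longer counts
  have hPcut : cutSet G P \ (F ∪ M) ⊆ (cutSet G T \ F) \ {b} := by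
    rintro x ⟨hxP, hxFM⟩
    rcases cutSet_diff_subset T M (cutSet_inducedComponent_subset _ u hxP) with hxT | hxM
    · exact ⟨⟨hxT, fun hxF => hxFM (Or.inl hxF)⟩, fun hxb => hxFM (Or.inr (hxb ▸ hbM))⟩
    · exact absurd (Or.inr hxM) hxFM
  have hbcut : b ∈ cutSet G T \ F := ⟨hbT, hMF.notMem_of_mem_left hbM⟩
  have hPcard : (cutSet G P \ (F ∪ M)).ncard ≤ c := by
    have := Set.ncard_sdiff_singleton_lt_of_mem hbcut
    have := Set.ncard_le_ncard hPcut
    omega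
  exact ⟨a, ⟨haM, hTF.notMem_of_mem_left (hPT haP).1⟩, haP, hPdisj, inducedComponent_connected hu,
    hPk, hPcard⟩

theorem ncard_sUnion_boundedNbhds_le (G : SimpleGraph V) (k c : ℕ) (F : Set V) (v : V) :
    (⋃₀ G.boundedNbhds k c F v).ncard ≤ k * (c + 1).factorial := by
  induction c generalizing F v with
  | zero =>
    obtain hempty | ⟨S₀, hS₀⟩ := (G.boundedNbhds k 0 F v).eq_empty_or_nonempty
    · simp [hempty]
    · simpa using (Set.ncard_le_ncard (sUnion_boundedNbhds_zero_subset hS₀)).trans hS₀.2.2.2.1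
  | succ c ih =>
    obtain hempty | hne := (G.boundedNbhds k (c + 1) F v).eq_empty_or_nonempty
    · simp [hempty]
    obtain ⟨M, hM, hMmax⟩ := Set.exists_max_image _ Set.ncard (Set.toFinite _) hne
    have hcover : ⋃₀ G.boundedNbhds k (c + 1) F v ⊆
        M ∪ ⋃ a ∈ cutSet G M \ F, ⋃₀ G.boundedNbhds k c (F ∪ M) a := by
      rintro u ⟨T, hT, huT⟩
      by_cases huM : u ∈ M
      · exact Or.inl huM
      obtain ⟨a, ha, hP⟩ := exists_inducedComponent_mem_boundedNbhds hM hMmax hT ⟨huT, huM⟩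
      exact Or.inr (Set.mem_biUnion ha ⟨_, hP, mem_inducedComponent ⟨huT, huM⟩⟩)
    calc (⋃₀ G.boundedNbhds k (c + 1) F v).ncard
        ≤ M.ncard + (⋃ a ∈ cutSet G M \ F, ⋃₀ G.boundedNbhds k c (F ∪ M) a).ncard :=
          (Set.ncard_le_ncard hcover).trans (Set.ncard_union_le _ _)
      _ ≤ k + (c + 1) * (k * (c + 1).factorial) := by
          gcongr
          · exact hM.2.2.2.1
          · exact (Set.ncard_biUnion_le_ncard_mul_s6 (Set.toFinite _) _ fun a _ => ih _ a).trans
              (Nat.mul_le_mul_right _ hM.2.2.2.2)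
      _ ≤ k * (c + 1 + 1).factorial := Nat.add_succ_mul_factorial_le k c

end SimpleGraph

lemma IsIsoNbhd.mem_boundedNbhds {V : Type} {G : SimpleGraph V} {u v : V} {S : Set V} {k c : ℕ}
    {δ : ℝ} (hS : IsIsoNbhd G u S k δ c) (hvS : v ∈ S) : S ∈ G.boundedNbhds k c ∅ v :=
  ⟨hvS, Set.disjoint_empty S, hS.2.1, by exact_mod_cast hS.2.2.1, by simpa using hS.2.2.2.1⟩

theorem union_of_isolated_neighborhoods_small_general {V : Type} [Fintype V]
    (G : SimpleGraph V) (v : V) (k c : ℕ)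
    (δ : ℝ) :
    (⋃₀ {S : Set V | IsIsoNbhd G v S (k : ℝ) δ c}).ncard ≤ k * (c + 1).factorial ∧
    {u : V | ∃ S : Set V, IsIsoNbhd G u S (k : ℝ) δ c ∧ v ∈ S}.ncard ≤
      k * (c + 1).factorial := by
  have hbound := G.ncard_sUnion_boundedNbhds_le k c ∅ v
  constructor
  · refine (Set.ncard_le_ncard (Set.sUnion_subset_sUnion ?_)).trans hbound
    exact fun S hS => hS.mem_boundedNbhds hS.1
  · refine (Set.ncard_le_ncard ?_).trans hbound
    rintro u ⟨S, hS, hvS⟩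
    exact ⟨S, hS.mem_boundedNbhds hvS, hS.1⟩

/-- Corollary 9 of the paper: the union of all `(k, δ, c)`-isolated
neighborhoods of a vertex `v` has size at most `k·(c+1)!`; in particular, at most
`k·(c+1)!` vertices `u` admit a `(k, δ, c)`-isolated neighborhood containing `v`. -/
theorem union_of_isolated_neighborhoods_small {V : Type} [Fintype V]
    (G : SimpleGraph V) (v : V) (k c : ℕ) (hk : 1 ≤ k) (hc : 1 ≤ c)
    (δ : ℝ) (hδ : δ ∈ Set.Ioo (0 : ℝ) 1) :
    (⋃₀ {S : Set V | IsIsoNbhd G v S (k : ℝ) δ c}).ncard ≤ k * (c + 1).factorial ∧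
    {u : V | ∃ S : Set V, IsIsoNbhd G u S (k : ℝ) δ c ∧ v ∈ S}.ncard ≤
      k * (c + 1).factorial :=
  union_of_isolated_neighborhoods_small_general G v k c δ
end

section
/- Let S_1, …, S_m be finite sets (m ≥ 1) and let C ≥ 1 be an integer such that every subfamily of {S_1, …, S_m} admits a cover of size at most C (a subfamily B of a family A is a cover of A if every member of A is contained in the union of the members of B). Consider a uniformly random permutation π of {1, …, m}, and call index j ∈ {1, …, m} 'marking' if S_{π(j)} is not contained in S_{π(1)} ∪ ⋯ ∪ S_{π(j−1)}. Then for each j, the probability that j is marking is at most C/j, and consequently the expected number of marking indices is at most C·(1 + log m). -/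
open scoped BigOperators

/-- Index `j` is *marking* for the permutation `π` (with respect to the family `S`):
the set `S (π j)` is not contained in the union of the sets `S (π i)` for `i < j`. -/
def IsMarking {α : Type} [DecidableEq α] {m : ℕ} (S : Fin m → Finset α)
    (π : Equiv.Perm (Fin m)) (j : Fin m) : Prop :=
  ¬ S (π j) ⊆ (Finset.univ.filter (fun i : Fin m => i < j)).biUnion (fun i => S (π i))

open Finset

open Classical in
lemma key_count {α : Type} [DecidableEq α] {m : ℕ}
    (S : Fin m → Finset α) (C : ℕ)
    (hcover : ∀ I : Finset (Fin m), ∃ J ⊆ I, J.card ≤ C ∧ ∀ i ∈ I, S i ⊆ J.biUnion S)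
    (j : Fin m) :
    (Finset.univ.filter (fun π : Equiv.Perm (Fin m) => IsMarking S π j)).card * ((j : ℕ) + 1)
      ≤ C * Nat.factorial m := by
  classical
  set K : Finset (Fin m) := Finset.univ.filter (fun k : Fin m => k ≤ j) with hKdef
  have hK : K.card = (j : ℕ) + 1 := by
    have : K = Finset.Iic j := by
      ext k; simp [hKdef]
    rw [this, Fin.card_Iic]
  have hper : ∀ π : Equiv.Perm (Fin m),
      (K.filter (fun k => IsMarking S (π * Equiv.swap j k) j)).card ≤ C := by
    intro π
    obtain ⟨J, hJI, hJC, hJcov⟩ := hcover (K.image π)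
    have hsub : K.filter (fun k => IsMarking S (π * Equiv.swap j k) j)
        ⊆ K.filter (fun k => π k ∈ J) := by
      intro k hk
      obtain ⟨hkK, hmark⟩ := Finset.mem_filter.mp hk
      refine Finset.mem_filter.mpr ⟨hkK, ?_⟩
      by_contra hnot
      apply hmark
      have hπkj : (π * Equiv.swap j k) j = π k := by
        simp [Equiv.Perm.mul_apply]
      rw [hπkj]
      have hπkI : π k ∈ K.image π := Finset.mem_image_of_mem π hkK
      refine (hJcov (π k) hπkI).trans ?_
      intro a ha
      obtain ⟨y, hyJ, hay⟩ := Finset.mem_biUnion.mp ha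
      obtain ⟨i, hiK, hiy⟩ := Finset.mem_image.mp (hJI hyJ)
      have hik : i ≠ k := by
        rintro rfl; exact hnot (hiy ▸ hyJ)
      have hilej : i ≤ j := (Finset.mem_filter.mp hiK).2
      have hklej : k ≤ j := (Finset.mem_filter.mp hkK).2
      set i' := Equiv.swap j k i with hi'
      have hi'lt : i' < j := by
        rcases eq_or_ne i j with hij | hij
        · have hkj : k ≠ j := fun h => hik (hij.trans h.symm)
          rw [hi', hij, Equiv.swap_apply_left]
          exact lt_of_le_of_ne hklej hkj
        · rw [hi', Equiv.swap_apply_of_ne_of_ne hij hik]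
          exact lt_of_le_of_ne hilej hij
      have happ : (π * Equiv.swap j k) i' = π i := by
        simp [hi', Equiv.Perm.mul_apply]
      refine Finset.mem_biUnion.mpr ⟨i', Finset.mem_filter.mpr ⟨Finset.mem_univ _, hi'lt⟩, ?_⟩
      rw [happ, hiy]; exact hay
    calc (K.filter (fun k => IsMarking S (π * Equiv.swap j k) j)).card
        ≤ (K.filter (fun k => π k ∈ J)).card := Finset.card_le_card hsub
      _ ≤ J.card := Finset.card_le_card_of_injOn π
            (fun k hk => (Finset.mem_filter.mp hk).2) (π.injective.injOn)
      _ ≤ C := hJC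
  have hbij : ∀ k : Fin m,
      (Finset.univ.filter (fun π : Equiv.Perm (Fin m) =>
        IsMarking S (π * Equiv.swap j k) j)).card
      = (Finset.univ.filter (fun π : Equiv.Perm (Fin m) => IsMarking S π j)).card := by
    intro k
    apply Finset.card_bij' (fun π _ => π * Equiv.swap j k) (fun π _ => π * Equiv.swap j k)
    · intro π hπ
      simpa using (Finset.mem_filter.mp hπ).2
    · intro π hπ
      have := (Finset.mem_filter.mp hπ).2
      simp only [Finset.mem_filter, Finset.mem_univ, true_and]
      rwa [mul_assoc, Equiv.swap_mul_self, mul_one]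
    · intro π _; rw [mul_assoc, Equiv.swap_mul_self, mul_one]
    · intro π _; rw [mul_assoc, Equiv.swap_mul_self, mul_one]
  calc (Finset.univ.filter (fun π : Equiv.Perm (Fin m) => IsMarking S π j)).card * ((j:ℕ)+1)
      = ∑ k ∈ K, (Finset.univ.filter (fun π : Equiv.Perm (Fin m) =>
          IsMarking S (π * Equiv.swap j k) j)).card := by
        rw [Finset.sum_congr rfl (fun k _ => hbij k), Finset.sum_const, hK, smul_eq_mul, mul_comm]
    _ = ∑ k ∈ K, ∑ π : Equiv.Perm (Fin m),
          (if IsMarking S (π * Equiv.swap j k) j then 1 else 0) :=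
        Finset.sum_congr rfl fun k _ => Finset.card_filter _ _
    _ = ∑ π : Equiv.Perm (Fin m), ∑ k ∈ K,
          (if IsMarking S (π * Equiv.swap j k) j then 1 else 0) := Finset.sum_comm
    _ = ∑ π : Equiv.Perm (Fin m),
          (K.filter (fun k => IsMarking S (π * Equiv.swap j k) j)).card :=
        Finset.sum_congr rfl fun π _ => (Finset.card_filter _ _).symm
    _ ≤ ∑ _π : Equiv.Perm (Fin m), C := Finset.sum_le_sum (fun π _ => hper π)
    _ = C * Nat.factorial m := by
        simp [Finset.sum_const, Fintype.card_perm, mul_comm]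


/-- let `S_1, …, S_m` be finite sets such that every subfamily admits a
cover of size at most `C`. For a uniformly random permutation `π` of `{1, …, m}`, the
probability that the `j`-th set in the order given by `π` is not covered by the preceding
ones is at most `C/j`; consequently the expected number of such "marking" indices is at
most `C·(1 + log m)`. Probabilities and expectations over the uniformly random permutation
are expressed as counts/sums over all `m!` permutations divided by `m!`. -/
theorem random_order_marking {α : Type} [DecidableEq α] (m : ℕ) (hm : 1 ≤ m)
    (S : Fin m → Finset α) (C : ℕ) (hC : 1 ≤ C)
    (hcover : ∀ I : Finset (Fin m), ∃ J ⊆ I, J.card ≤ C ∧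
      ∀ i ∈ I, S i ⊆ J.biUnion S) :
    (∀ j : Fin m,
      ({π : Equiv.Perm (Fin m) | IsMarking S π j}.ncard : ℝ) / (Nat.factorial m) ≤
        (C : ℝ) / ((j : ℕ) + 1)) ∧
    (∑ π : Equiv.Perm (Fin m), ({j : Fin m | IsMarking S π j}.ncard : ℝ)) /
        (Nat.factorial m) ≤ (C : ℝ) * (1 + Real.log m) := by
  classical
  have hfact : (0 : ℝ) < Nat.factorial m := by positivity
  have hncard : ∀ j : Fin m, {π : Equiv.Perm (Fin m) | IsMarking S π j}.ncard
      = (Finset.univ.filter (fun π : Equiv.Perm (Fin m) => IsMarking S π j)).card := by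
    intro j
    rw [Set.ncard_eq_toFinset_card']
    congr 1
    ext π; simp
  have part1 : ∀ j : Fin m,
      ({π : Equiv.Perm (Fin m) | IsMarking S π j}.ncard : ℝ) / (Nat.factorial m) ≤
        (C : ℝ) / ((j : ℕ) + 1) := by
    intro j
    rw [hncard j, div_le_div_iff₀ hfact (by positivity)]
    calc ((Finset.univ.filter (fun π : Equiv.Perm (Fin m) => IsMarking S π j)).card : ℝ)
          * (((j:ℕ):ℝ) + 1)
        = (((Finset.univ.filter (fun π : Equiv.Perm (Fin m) => IsMarking S π j)).card
            * ((j:ℕ)+1) : ℕ) : ℝ) := by push_cast; ring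
      _ ≤ ((C * Nat.factorial m : ℕ) : ℝ) := by
          exact_mod_cast key_count S C hcover j
      _ = (C : ℝ) * Nat.factorial m := by push_cast; ring
  refine ⟨part1, ?_⟩
  have hswap : (∑ π : Equiv.Perm (Fin m), ({j : Fin m | IsMarking S π j}.ncard : ℝ))
      = ∑ j : Fin m, ({π : Equiv.Perm (Fin m) | IsMarking S π j}.ncard : ℝ) := by
    have h1 : ∀ π : Equiv.Perm (Fin m), ({j : Fin m | IsMarking S π j}.ncard : ℝ)
        = ∑ j : Fin m, (if IsMarking S π j then (1:ℝ) else 0) := by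
      intro π
      rw [Set.ncard_eq_toFinset_card']
      have : {j : Fin m | IsMarking S π j}.toFinset
          = Finset.univ.filter (fun j => IsMarking S π j) := by ext; simp
      rw [this, Finset.card_filter]
      push_cast
      rfl
    simp_rw [h1, hncard]
    rw [Finset.sum_comm]
    congr 1; ext j
    rw [Finset.card_filter]
    push_cast
    rfl
  rw [hswap, Finset.sum_div]
  calc ∑ j : Fin m, ({π : Equiv.Perm (Fin m) | IsMarking S π j}.ncard : ℝ) / Nat.factorial m
      ≤ ∑ j : Fin m, (C : ℝ) / ((j : ℕ) + 1) := Finset.sum_le_sum (fun j _ => part1 j)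
    _ = (C : ℝ) * ∑ i ∈ Finset.range m, ((i : ℝ) + 1)⁻¹ := by
        rw [Fin.sum_univ_eq_sum_range (fun i => (C : ℝ) / ((i : ℕ) + 1)), Finset.mul_sum]
        refine Finset.sum_congr rfl fun i _ => ?_
        ring
    _ = (C : ℝ) * (harmonic m : ℝ) := by
        rw [harmonic]
        push_cast
        norm_cast
    _ ≤ (C : ℝ) * (1 + Real.log m) := by
        exact mul_le_mul_of_nonneg_left (harmonic_le_one_add_log m) (by positivity)
end

section
/- Let G = (V, E) be a finite simple graph with maximum degree bounded by d and treewidth bounded by h, and let ε ∈ (0,1/2). Suppose δ ∈ (0,1/2) and a positive integer k satisfy δ ≤ ε/(100·(2h+3)!·(1 + log k + log((2h+3)!))) and k ≥ 28860·d⁵·(h+1)⁵/(δε²). Then there exists a function f : V → 2^V such that: (1) for all v ∈ V, v ∈ f(v); (2) for all v ∈ V and all w ∈ f(v), f(v) = f(w); (3) for all v ∈ V, |f(v)| ≤ k; and (4) the number of edges (v,w) ∈ E with f(v) ≠ f(w) is at most ε|V|. -/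
/-- `G` has treewidth at most `h`: some tree decomposition has all bags of size ≤ `h + 1`. -/
def HasTreewidthLE {V : Type} (G : SimpleGraph V) (h : ℕ) : Prop :=
  ∃ (m : ℕ) (bags : Fin m → Finset V) (T : SimpleGraph (Fin m)),
    IsTreeDecomposition G bags T ∧ ∀ i, (bags i).card ≤ h + 1

open Finset

open scoped Classical

lemma Finset.exists_subset_le_card_biUnion_le {ι α : Type*} {X : ι → Finset α} {s : Finset ι}
    {n t : ℕ} (hX : ∀ i ∈ s, #(X i) ≤ t) (hn : n ≤ #(s.biUnion X)) :
    ∃ u ⊆ s, n ≤ #(u.biUnion X) ∧ #(u.biUnion X) ≤ n + t := by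
  induction s using Finset.induction_on with
  | empty => exact ⟨∅, subset_rfl, hn, by simp⟩
  | insert i s _ ih =>
    by_cases hs : n ≤ #(s.biUnion X)
    · obtain ⟨u, hus, hu⟩ := ih (fun j hj ↦ hX j (mem_insert_of_mem hj)) hs
      exact ⟨u, hus.trans (subset_insert i s), hu⟩
    · refine ⟨insert i s, subset_rfl, hn, ?_⟩
      rw [biUnion_insert]
      have := hX i (mem_insert_self i s)
      have := card_union_le (X i) (s.biUnion X)
      omega

namespace Finpartition

variable {α : Type*} [DecidableEq α] {a b c : Finset α} (P : Finpartition a)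

lemma part_extend_of_mem_left {hb : b ≠ ∅} {hab : Disjoint a b} {hc : a ∪ b = c} {x : α}
    (hx : x ∈ a) : (P.extend hb hab hc).part x = P.part x :=
  part_eq_of_mem _ (mem_insert_of_mem (P.part_mem.2 hx)) (P.mem_part hx)

lemma part_extend_of_mem_right {hb : b ≠ ∅} {hab : Disjoint a b} {hc : a ∪ b = c} {x : α}
    (hx : x ∈ b) : (P.extend hb hab hc).part x = b :=
  part_eq_of_mem _ (mem_insert_self b P.parts) hx

end Finpartition

namespace SimpleGraph

section Side

variable {ι : Type*} {T : SimpleGraph ι}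

-- For `a = b` nothing is deleted, so `T.side b b` is the connected component of `b`.
def side (T : SimpleGraph ι) (a b : ι) : Set ι :=
  {x | (T.deleteEdges {s(a, b)}).Reachable b x}

lemma mem_side_self (a b : ι) : b ∈ T.side a b := Reachable.refl b

lemma IsAcyclic.notMem_side (hT : T.IsAcyclic) {b c : ι} (hbc : T.Adj b c) :
    b ∉ T.side b c := fun h ↦
  isAcyclic_iff_forall_adj_isBridge.1 hT hbc (reachable_comm.1 h)

lemma IsAcyclic.side_subset_side (hT : T.IsAcyclic) {a b c : ι} (hbc : T.Adj b c)
    (hca : c ≠ a) : T.side b c ⊆ T.side a b := by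
  intro x hx
  obtain ⟨p, hp⟩ := reachable_deleteEdges_iff_exists_walk.1 hx
  refine reachable_deleteEdges_iff_exists_walk.2 ⟨.cons hbc p, ?_⟩
  rw [Walk.edges_cons, List.mem_cons, not_or]
  constructor
  · rw [Sym2.eq_iff]
    rintro (⟨rfl, rfl⟩ | ⟨rfl, -⟩)
    exacts [hbc.ne rfl, hca rfl]
  · -- a walk from `c` through `b` avoiding `s(b, c)` would contradict that `s(b, c)` is a bridge
    intro hab
    have hb := p.snd_mem_support_of_mem_edges hab
    exact hT.notMem_side hbc (reachable_deleteEdges_iff_exists_walk.2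
      ⟨p.takeUntil b hb, fun h ↦ hp (p.edges_takeUntil_subset_edges hb h)⟩)

lemma IsAcyclic.side_ssubset_side (hT : T.IsAcyclic) {a b c : ι} (hbc : T.Adj b c)
    (hca : c ≠ a) : T.side b c ⊂ T.side a b :=
  Set.ssubset_iff_subset_ne.2
    ⟨hT.side_subset_side hbc hca, fun h ↦ hT.notMem_side hbc (h ▸ mem_side_self a b)⟩

lemma Reachable.exists_adj_mem_side {b x : ι} (h : T.Reachable b x) (hx : x ≠ b) :
    ∃ c, T.Adj b c ∧ x ∈ T.side b c := by
  obtain ⟨p, hp⟩ := h.some.toPath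
  cases p with
  | nil => exact absurd rfl hx
  | cons hbc q =>
    refine ⟨_, hbc, reachable_deleteEdges_iff_exists_walk.2 ⟨q, fun he ↦ ?_⟩⟩
    exact ((Walk.cons_isPath_iff _ _).1 hp).2 (q.fst_mem_support_of_mem_edges he)

lemma exists_adj_mem_side_of_mem_side {a b x : ι} (hx : x ∈ T.side a b) (hxb : x ≠ b) :
    ∃ c, T.Adj b c ∧ c ≠ a ∧ x ∈ T.side b c := by
  obtain ⟨c, hbc, hxc⟩ := Reachable.exists_adj_mem_side hx hxb
  rw [deleteEdges_adj] at hbc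
  refine ⟨c, hbc.1, ?_, hxc.mono (deleteEdges_mono (deleteEdges_le _))⟩
  rintro rfl
  exact hbc.2 Sym2.eq_swap

lemma eq_of_adj_of_mem_side_of_notMem_side {a b p q : ι} (hp : p ∈ T.side a b)
    (hq : q ∉ T.side a b) (hpq : T.Adj p q) : p = b ∧ q = a := by
  by_cases hedge : s(p, q) = s(a, b)
  · rcases Sym2.eq_iff.1 hedge with ⟨-, rfl⟩ | h
    · exact absurd (mem_side_self a q) hq
    · exact h
  · exact absurd (hp.trans (deleteEdges_adj.2 ⟨hpq, hedge⟩).reachable) hq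

end Side

variable {V : Type*} [Fintype V] (G : SimpleGraph V)

-- Only edges inside `R` count: outside `R`, `P.part` is `∅`.
noncomputable def cutEdges {R : Finset V} (P : Finpartition R) : Finset (Sym2 V) :=
  {e ∈ G.edgeFinset | ∃ u ∈ R, ∃ v ∈ R, e = s(u, v) ∧ P.part u ≠ P.part v}

variable {G}

lemma cutEdges_top (R : Finset V) : G.cutEdges (⊤ : Finpartition R) = ∅ := by
  refine filter_false_of_mem fun e _ ↦ ?_
  rintro ⟨u, hu, v, hv, -, huv⟩
  have hpart : ∀ x ∈ R, (⊤ : Finpartition R).part x = R := fun x hx ↦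
    mem_singleton.1 (Finpartition.parts_top_subset R ((Finpartition.part_mem _).2 hx))
  exact huv ((hpart u hu).trans (hpart v hv).symm)

lemma cutEdges_extend_subset {a b c : Finset V} (P : Finpartition a) {hb : b ≠ ∅}
    {hab : Disjoint a b} {hc : a ∪ b = c} :
    G.cutEdges (P.extend hb hab hc) ⊆
      {e ∈ G.edgeFinset | ∃ u ∈ b, ∃ v ∈ a, e = s(u, v)} ∪ G.cutEdges P := by
  intro e he
  simp only [cutEdges, mem_filter, mem_union] at he ⊢
  obtain ⟨he, u, hu, v, hv, rfl, huv⟩ := he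
  rw [← hc, mem_union] at hu hv
  rcases hu with hu | hu <;> rcases hv with hv | hv
  · rw [P.part_extend_of_mem_left hu, P.part_extend_of_mem_left hv] at huv
    exact Or.inr ⟨he, u, hu, v, hv, rfl, huv⟩
  · exact Or.inl ⟨he, v, hv, u, hu, Sym2.eq_swap⟩
  · exact Or.inl ⟨he, u, hu, v, hv, rfl⟩
  · rw [P.part_extend_of_mem_right hu, P.part_extend_of_mem_right hv] at huv
    exact absurd rfl huv

lemma cutEdges_eq_empty {R : Finset V} (hdeg : ∀ v, G.degree v ≤ 0) (P : Finpartition R) :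
    G.cutEdges P = ∅ := by
  have hE : #G.edgeFinset = 0 := by
    have := G.sum_degrees_eq_twice_card_edges
    rw [sum_eq_zero fun v _ ↦ Nat.le_zero.1 (hdeg v)] at this
    omega
  exact subset_empty.1 (card_eq_zero.1 hE ▸ filter_subset _ _)

lemma exists_fun_of_finpartition (P : Finpartition (univ : Finset V)) {k : ℕ}
    (hP : ∀ B ∈ P.parts, #B ≤ k) :
    ∃ f : V → Set V, (∀ v, v ∈ f v) ∧ (∀ v, ∀ w ∈ f v, f v = f w) ∧ (∀ v, (f v).ncard ≤ k) ∧
      {e ∈ G.edgeSet | ∃ v w, e = s(v, w) ∧ f v ≠ f w}.ncard ≤ #(G.cutEdges P) := by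
  have hpart (v : V) : P.part v ∈ P.parts := P.part_mem.2 (mem_univ v)
  refine ⟨fun v ↦ P.part v, fun v ↦ P.mem_part (mem_univ v),
    fun v w hw ↦ congrArg _ (P.part_eq_of_mem (hpart v) hw).symm,
    fun v ↦ (Set.ncard_coe_finset _).trans_le (hP _ (hpart v)), ?_⟩
  rw [← Set.ncard_coe_finset]
  refine Set.ncard_le_ncard ?_
  rintro _ ⟨he, v, w, rfl, hvw⟩
  rw [cutEdges, coe_filter]
  exact ⟨mem_edgeFinset.2 he, v, mem_univ v, w, mem_univ w, rfl, fun h ↦ hvw (congrArg _ h)⟩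

end SimpleGraph

section TreeDecomposition

variable {V : Type} {m : ℕ} {G : SimpleGraph V} {bags : Fin m → Finset V}
  {T : SimpleGraph (Fin m)}

def BagSeparates (bags : Fin m → Finset V) (b : Fin m) (S : Set (Fin m)) : Prop :=
  ∀ i ∈ S, ∀ j ∉ S, ∀ v ∈ bags i, v ∈ bags j → v ∈ bags b

lemma BagSeparates.biUnion {b : Fin m} {C : Finset (Fin m)} {A : Fin m → Set (Fin m)}
    (hA : ∀ c ∈ C, BagSeparates bags b (A c)) : BagSeparates bags b (⋃ c ∈ C, A c) := by
  intro i hi j hj v hvi hvj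
  obtain ⟨c, hc, hic⟩ := Set.mem_iUnion₂.1 hi
  exact hA c hc i hic j (fun hjc ↦ hj (Set.mem_biUnion hc hjc)) v hvi hvj

namespace IsTreeDecomposition

/-- Since the bags containing `v` span a connected subtree, it suffices to check the tree edges
leaving `S`. -/
lemma bagSeparates_of_adj (hT : IsTreeDecomposition G bags T) {b : Fin m} {S : Set (Fin m)}
    (hS : ∀ p ∈ S, ∀ q ∉ S, T.Adj p q → ∀ v ∈ bags p, v ∈ bags q → v ∈ bags b) :
    BagSeparates bags b S := by
  intro i hi j hj v hvi hvj
  obtain ⟨w⟩ := (hT.2.2.2 v).preconnected ⟨i, hvi⟩ ⟨j, hvj⟩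
  obtain ⟨d, -, hd, hd'⟩ := w.exists_boundary_dart {z | z.1 ∈ S} hi hj
  exact hS _ hd _ hd' d.adj v d.fst.2 d.snd.2

lemma bagSeparates_side (hT : IsTreeDecomposition G bags T) (a b : Fin m) :
    BagSeparates bags a (T.side a b) :=
  hT.bagSeparates_of_adj fun _ hp _ hq hpq _ _ hv ↦
    (SimpleGraph.eq_of_adj_of_mem_side_of_notMem_side hp hq hpq).2 ▸ hv

lemma bagSeparates_side_self (hT : IsTreeDecomposition G bags T) (b r : Fin m) :
    BagSeparates bags b (T.side r r) :=
  hT.bagSeparates_of_adj fun _ hp _ hq hpq ↦ by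
    obtain ⟨rfl, rfl⟩ := SimpleGraph.eq_of_adj_of_mem_side_of_notMem_side hp hq hpq
    exact absurd hpq T.irrefl

/-- If some side is heavy, a minimal heavy side `T.side a b` splits at `b` into lighter sides;
otherwise the components `T.side r r` themselves are light. -/
lemma exists_light_branches (hT : IsTreeDecomposition G bags T) (R : Finset V) (ρ : V → Fin m)
    {t : ℕ} (hR : t < #R) :
    ∃ (b : Fin m) (C : Finset (Fin m)) (A : Fin m → Set (Fin m)),
      (∀ c ∈ C, BagSeparates bags b (A c) ∧ #{v ∈ R | ρ v ∈ A c} ≤ t) ∧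
      t < #{v ∈ R | ρ v ∈ insert b (⋃ c ∈ C, A c)} := by
  by_cases hheavy : ∃ p : Fin m × Fin m, t < #{v ∈ R | ρ v ∈ T.side p.1 p.2}
  · obtain ⟨p, hp⟩ := hheavy
    obtain ⟨⟨a, b⟩, hab, hmin⟩ :=
      exists_min_image ({p | t < #{v ∈ R | ρ v ∈ T.side p.1 p.2}} : Finset (Fin m × Fin m))
        (fun p ↦ (T.side p.1 p.2).ncard) ⟨p, by simpa using hp⟩
    replace hab : t < #{v ∈ R | ρ v ∈ T.side a b} := by simpa using hab
    set C : Finset (Fin m) := {c | T.Adj b c ∧ c ≠ a}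
    have hlight : ∀ c ∈ C, #{v ∈ R | ρ v ∈ T.side b c} ≤ t := by
      intro c hc
      rw [mem_filter] at hc
      by_contra! hheavy
      have : (T.side a b).ncard ≤ (T.side b c).ncard := hmin (b, c) (by simpa using hheavy)
      have := Set.ncard_lt_ncard (hT.1.side_ssubset_side hc.2.1 hc.2.2)
      omega
    have hcover : T.side a b ⊆ insert b (⋃ c ∈ C, T.side b c) := by
      intro x hx
      by_cases hxb : x = b
      · exact Or.inl hxb
      · obtain ⟨c, hbc, hca, hxc⟩ := SimpleGraph.exists_adj_mem_side_of_mem_side hx hxb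
        exact Or.inr (Set.mem_biUnion (by simp [C, hbc, hca]) hxc)
    exact ⟨b, C, T.side b, fun c hc ↦ ⟨hT.bagSeparates_side b c, hlight c hc⟩,
      hab.trans_le (card_le_card (monotone_filter_right R fun v _ hv ↦ hcover hv))⟩
  · push Not at hheavy
    obtain ⟨v₀, -⟩ := card_pos.1 (by omega : 0 < #R)
    refine ⟨ρ v₀, univ, fun r ↦ T.side r r,
      fun r _ ↦ ⟨hT.bagSeparates_side_self _ r, hheavy (r, r)⟩, ?_⟩
    convert hR using 2
    exact filter_true_of_mem fun v _ ↦
      Or.inr (Set.mem_biUnion (mem_univ _) (SimpleGraph.mem_side_self _ _))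

variable [Fintype V] {h d : ℕ}

lemma card_boundary_le (hT : IsTreeDecomposition G bags T) (hdeg : ∀ v, G.degree v ≤ d)
    {ρ : V → Fin m} (hρ : ∀ v, v ∈ bags (ρ v)) {b : Fin m} {S : Set (Fin m)}
    (hS : BagSeparates bags b S) :
    #{e ∈ G.edgeFinset | ∃ u v, e = s(u, v) ∧ ρ u ∈ S ∧ ρ v ∉ S} ≤ #(bags b) * d := by
  have hsub : {e ∈ G.edgeFinset | ∃ u v, e = s(u, v) ∧ ρ u ∈ S ∧ ρ v ∉ S} ⊆
      (bags b).biUnion fun x ↦ G.incidenceFinset x := by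
    simp only [subset_iff, mem_filter, mem_biUnion]
    rintro _ ⟨he, u, v, rfl, hu, hv⟩
    have huv := SimpleGraph.mem_edgeFinset.1 he
    have hinc : ∀ x ∈ s(u, v), s(u, v) ∈ G.incidenceFinset x :=
      fun x hx ↦ (G.mem_incidenceFinset _ _).2 ⟨huv, hx⟩
    obtain ⟨j, huj, hvj⟩ := hT.2.2.1 u v huv
    by_cases hj : j ∈ S
    · exact ⟨v, hS j hj _ hv v hvj (hρ v), hinc v (Sym2.mem_mk_right u v)⟩
    · exact ⟨u, hS _ hu j hj u (hρ u) huj, hinc u (Sym2.mem_mk_left u v)⟩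
  calc _ ≤ #((bags b).biUnion fun x ↦ G.incidenceFinset x) := card_le_card hsub
    _ ≤ ∑ x ∈ bags b, #(G.incidenceFinset x) := card_biUnion_le
    _ ≤ ∑ _x ∈ bags b, d :=
        sum_le_sum fun x _ ↦ (G.card_incidenceFinset_eq_degree x).trans_le (hdeg x)
    _ = #(bags b) * d := by rw [sum_const, smul_eq_mul]

lemma exists_chunk (hT : IsTreeDecomposition G bags T) (hbags : ∀ i, #(bags i) ≤ h + 1)
    (hdeg : ∀ v, G.degree v ≤ d) {s k : ℕ} (hsk : 2 * s + h ≤ k) {R : Finset V}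
    (hR : k < #R) :
    ∃ C ⊆ R, s ≤ #C ∧ #C ≤ k ∧
      #{e ∈ G.edgeFinset | ∃ u ∈ C, ∃ v ∈ R \ C, e = s(u, v)} ≤ (h + 1) * d := by
  choose ρ hρ using hT.2.1
  obtain ⟨b, C, A, hA, htot⟩ := exists_light_branches hT R ρ (t := s + h) (by omega)
  set X : Fin m → Finset V := fun c ↦ {v ∈ R | ρ v ∈ A c}
  have hbranches : s ≤ #(C.biUnion X) := by
    have hsub : {v ∈ R | ρ v ∈ insert b (⋃ c ∈ C, A c)} ⊆ bags b ∪ C.biUnion X := by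
      intro v hv
      simp only [mem_filter, Set.mem_insert_iff, Set.mem_iUnion₂] at hv
      obtain ⟨hvR, rfl | ⟨c, hc, hvc⟩⟩ := hv
      · exact mem_union_left _ (hρ v)
      · exact mem_union_right _ (mem_biUnion.2 ⟨c, hc, mem_filter.2 ⟨hvR, hvc⟩⟩)
    have := (card_le_card hsub).trans (card_union_le _ _)
    have := hbags b
    omega
  obtain ⟨u, huC, hlo, hhi⟩ :=
    Finset.exists_subset_le_card_biUnion_le (X := X) (fun c hc ↦ (hA c hc).2) hbranches
  have hmem : ∀ v, v ∈ u.biUnion X ↔ v ∈ R ∧ ρ v ∈ ⋃ c ∈ u, A c := by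
    simp only [X, mem_biUnion, mem_filter, Set.mem_iUnion₂, exists_prop]
    exact fun v ↦
      ⟨fun ⟨c, hc, hv, hvc⟩ ↦ ⟨hv, c, hc, hvc⟩, fun ⟨hv, c, hc, hvc⟩ ↦ ⟨c, hc, hv, hvc⟩⟩
  refine ⟨u.biUnion X, fun v hv ↦ ((hmem v).1 hv).1, hlo, by omega, ?_⟩
  calc _ ≤ #{e ∈ G.edgeFinset | ∃ x y, e = s(x, y) ∧
          ρ x ∈ ⋃ c ∈ u, A c ∧ ρ y ∉ ⋃ c ∈ u, A c} := by
        refine card_le_card (monotone_filter_right _ ?_)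
        rintro _ - ⟨x, hx, y, hy, rfl⟩
        rw [mem_sdiff, hmem] at hy
        exact ⟨x, y, rfl, ((hmem x).1 hx).2, fun h ↦ hy.2 ⟨hy.1, h⟩⟩
    _ ≤ #(bags b) * d :=
        card_boundary_le hT hdeg hρ (BagSeparates.biUnion fun c hc ↦ (hA c (huC hc)).1)
    _ ≤ (h + 1) * d := Nat.mul_le_mul_right d (hbags b)

lemma exists_finpartition (hT : IsTreeDecomposition G bags T)
    (hbags : ∀ i, #(bags i) ≤ h + 1) (hdeg : ∀ v, G.degree v ≤ d) {s k : ℕ} (hs : 0 < s)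
    (hsk : 2 * s + h ≤ k) (R : Finset V) :
    ∃ P : Finpartition R, (∀ B ∈ P.parts, #B ≤ k) ∧
      #(G.cutEdges P) * s ≤ (h + 1) * d * #R := by
  induction R using Finset.strongInduction with
  | H R ih =>
  by_cases hRk : #R ≤ k
  · refine ⟨⊤, fun B hB ↦ ?_, by simp [SimpleGraph.cutEdges_top]⟩
    rwa [mem_singleton.1 (Finpartition.parts_top_subset R hB)]
  push Not at hRk
  obtain ⟨C, hCR, hsC, hCk, hbd⟩ := exists_chunk hT hbags hdeg hsk hRk
  have hC : C.Nonempty := card_pos.1 (hs.trans_le hsC)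
  obtain ⟨P, hPk, hPcut⟩ := ih (R \ C) (sdiff_ssubset hCR hC)
  refine ⟨P.extend hC.ne_empty disjoint_sdiff_self_left (sdiff_union_of_subset hCR),
    ?_, ?_⟩
  · simpa [Finpartition.extend_parts] using ⟨hCk, hPk⟩
  calc #(G.cutEdges _) * s
      ≤ (#{e ∈ G.edgeFinset | ∃ u ∈ C, ∃ v ∈ R \ C, e = s(u, v)} + #(G.cutEdges P)) * s :=
        Nat.mul_le_mul_right s ((card_le_card (SimpleGraph.cutEdges_extend_subset P)).trans
          (card_union_le _ _))
    _ ≤ (h + 1) * d * #C + (h + 1) * d * #(R \ C) := by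
        rw [add_mul]; exact add_le_add (Nat.mul_le_mul hbd hsC) hPcut
    _ = (h + 1) * d * #R := by rw [← mul_add, add_comm #C, card_sdiff_add_card_eq_card hCR]

end IsTreeDecomposition

end TreeDecomposition

lemma four_hundred_mul_le_of_bounds {d h k : ℕ} {ε δ : ℝ} (hε : ε ∈ Set.Ioo (0 : ℝ) (1/2))
    (hδ : 0 < δ)
    (hδk : δ ≤ ε / (100 * (Nat.factorial (2 * h + 3)) *
      (1 + Real.log k + Real.log (Nat.factorial (2 * h + 3)))))
    (hkb : (28860 * d ^ 5 * (h + 1) ^ 5 : ℝ) / (δ * ε ^ 2) ≤ k) :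
    400 * ((h + 1) * d : ℝ) ≤ ε * k := by
  obtain ⟨hε0, hε1⟩ := hε
  have hF : (1 : ℝ) ≤ Nat.factorial (2 * h + 3) := mod_cast Nat.factorial_pos _
  have hδ100 : δ ≤ ε / 100 := hδk.trans (div_le_div_of_nonneg_left hε0.le (by norm_num)
    (by nlinarith [Real.log_natCast_nonneg k, Real.log_natCast_nonneg (2 * h + 3).factorial]))
  have hX : ((h + 1) * d : ℝ) ≤ d ^ 5 * (h + 1) ^ 5 := by
    exact_mod_cast (Nat.mul_le_mul (Nat.le_self_pow (by norm_num) (h + 1))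
      (Nat.le_self_pow (by norm_num) d)).trans_eq (Nat.mul_comm _ _)
  have hk : 28860 * d ^ 5 * (h + 1) ^ 5 ≤ k * (δ * ε ^ 2) :=
    (div_le_iff₀ (by positivity)).1 hkb
  have hδε : δ * ε ^ 2 ≤ ε / 400 :=
    calc δ * ε ^ 2 ≤ ε / 100 * (1 / 2) ^ 2 := by gcongr
      _ = ε / 400 := by ring
  have : (k : ℝ) * (δ * ε ^ 2) ≤ k * (ε / 400) := by gcongr
  nlinarith [(by positivity : (0 : ℝ) ≤ d ^ 5 * (h + 1) ^ 5)]

lemma exists_chunk_size {d h k : ℕ} {ε : ℝ} (hε : ε ∈ Set.Ioo (0 : ℝ) (1/2)) (hd : 0 < d)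
    (hkd : 400 * ((h + 1) * d : ℝ) ≤ ε * k) :
    ∃ s : ℕ, 0 < s ∧ 2 * s + h ≤ k ∧ ((h + 1) * d : ℝ) ≤ ε * s := by
  obtain ⟨hε0, hε1⟩ := hε
  have hd1 : (1 : ℝ) ≤ d := mod_cast hd
  have hk : 800 * (h + 1) ≤ k := by
    have : (800 * (h + 1) : ℝ) ≤ k := by nlinarith
    exact_mod_cast this
  refine ⟨k / 4, by omega, by omega, ?_⟩
  have : (k : ℝ) ≤ 4 * (k / 4 : ℕ) + 3 := mod_cast (by omega : k ≤ 4 * (k / 4) + 3)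
  nlinarith

/-- combinatorial content of Theorem 1 of the paper: for a graph `G` of
maximum degree at most `d` and treewidth at most `h`, and parameters `ε, δ ∈ (0, 1/2)` and a
positive integer `k` with `δ ≤ ε/(100·(2h+3)!·(1 + log k + log((2h+3)!)))` and
`k ≥ 28860·d⁵·(h+1)⁵/(δε²)`, there is a partition `f` of the vertex set of `G` into parts
of size at most `k` such that the number of edges joining distinct parts is at most
`ε·|V|`. -/
theorem main_partition {V : Type} [Fintype V] (G : SimpleGraph V)
    (d h : ℕ) (hdeg : ∀ v : V, (G.neighborSet v).ncard ≤ d)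
    (htw : HasTreewidthLE G h)
    (ε δ : ℝ) (hε : ε ∈ Set.Ioo (0 : ℝ) (1/2)) (hδ : δ ∈ Set.Ioo (0 : ℝ) (1/2))
    (k : ℕ) (hk : 0 < k)
    (hδk : δ ≤ ε / (100 * (Nat.factorial (2 * h + 3)) *
      (1 + Real.log k + Real.log (Nat.factorial (2 * h + 3)))))
    (hkb : (28860 * d ^ 5 * (h + 1) ^ 5 : ℝ) / (δ * ε ^ 2) ≤ k) :
    ∃ f : V → Set V,
      (∀ v : V, v ∈ f v) ∧
      (∀ v : V, ∀ w ∈ f v, f v = f w) ∧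
      (∀ v : V, (f v).ncard ≤ k) ∧
      ({e ∈ G.edgeSet | ∃ v w : V, e = s(v, w) ∧ f v ≠ f w}.ncard : ℝ) ≤
        ε * (Fintype.card V : ℝ) := by
  have hdeg' : ∀ v, G.degree v ≤ d := fun v ↦ by
    rw [← G.card_neighborSet_eq_degree, ← Nat.card_eq_fintype_card, Nat.card_coe_set_eq]
    exact hdeg v
  obtain ⟨P, hPk, hcut⟩ : ∃ P : Finpartition (univ : Finset V), (∀ B ∈ P.parts, #B ≤ k) ∧
      (#(G.cutEdges P) : ℝ) ≤ ε * Fintype.card V := by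
    rcases d.eq_zero_or_pos with rfl | hd
    · refine ⟨⊥, fun B hB ↦ ?_, by
        simpa [G.cutEdges_eq_empty hdeg'] using mul_nonneg hε.1.le (Fintype.card V).cast_nonneg⟩
      obtain ⟨v, -, rfl⟩ := Finpartition.mem_bot_iff.1 hB
      exact (card_singleton v).trans_le hk
    obtain ⟨s, hs, hsk, hsε⟩ :=
      exists_chunk_size hε hd (four_hundred_mul_le_of_bounds hε hδ.1 hδk hkb)
    obtain ⟨m, bags, T, hT, hbags⟩ := htw
    obtain ⟨P, hPk, hcut⟩ := hT.exists_finpartition hbags hdeg' hs hsk univ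
    refine ⟨P, hPk, le_of_mul_le_mul_right ?_ (Nat.cast_pos.2 hs : (0 : ℝ) < s)⟩
    calc (#(G.cutEdges P) : ℝ) * s ≤ (h + 1) * d * Fintype.card V := mod_cast hcut
      _ ≤ ε * s * Fintype.card V := by gcongr
      _ = ε * Fintype.card V * s := by ring
  obtain ⟨f, hf_mem, hf_eq, hf_card, hf_cut⟩ := G.exists_fun_of_finpartition P hPk
  exact ⟨f, hf_mem, hf_eq, hf_card, (Nat.cast_le.2 hf_cut).trans hcut⟩
end

section
/- Let G = (V, E) be a finite simple graph with maximum degree bounded by d and treewidth bounded by h. Then for every ε ∈ (0,1/2) there exists a positive integer k with k ≤ K(d, h, ε) for some function K depending only on d, h, and ε (in particular independent of |V|), and a partition of V into parts each of size at most k such that the number of edges of G whose endpoints lie in different parts is at most ε|V|. Concretely, one may take any k satisfying k ≥ 2886000·d⁵·(2h+3)!·(1 + log k + log((2h+3)!))/ε³. -/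
/-!
Fix a tree decomposition of width `h`. Every nonempty vertex set `R` contains a piece `W` of at
most `k` vertices all of whose edges to `R \ W` leave from a single bag, and with `|W| ≥ k / 2`
unless there are no such edges at all: take a minimal branch of the forest carrying at least
`k / 2` vertices of `R`; the branches hanging below its root carry fewer, so greedily adding them
to the root bag produces `W`. Cutting off such pieces one after another partitions `V` into parts
of size at most `k` whose boundary vertices form a set `B` with `k |B| ≤ 2 (h + 1) |V|`. Every cut
edge meets `B`, so there are at most `d |B| ≤ 2 d (h + 1) |V| / k ≤ ε |V|` of them, as the bound
on `k` forces `2 d (h + 1) ≤ ε k`.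
-/

open SimpleGraph

section Forest

variable {ι : Type*} (T : SimpleGraph ι)

def branch (j x : ι) : Set ι :=
  {y | (T.deleteEdges {s(j, x)}).Reachable x y}

lemma self_mem_branch (j x : ι) : x ∈ branch T j x :=
  Reachable.refl x

variable {T}

lemma left_notMem_branch (hT : T.IsAcyclic) {j x : ι} (hjx : T.Adj j x) :
    j ∉ branch T j x :=
  fun h => isAcyclic_iff_forall_adj_isBridge.mp hT hjx h.symm

lemma eq_or_mem_branch_of_reachable {H : SimpleGraph ι} (hHT : H ≤ T) {j y : ι}
    (hjy : H.Reachable j y) : y = j ∨ ∃ x, H.Adj j x ∧ y ∈ branch T j x := by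
  classical
  obtain ⟨p, hp⟩ := hjy.some.toPath
  cases p with
  | nil => exact .inl rfl
  | @cons _ x _ hjx tail =>
    -- the tail of a path from `j` never returns to `j`, so it avoids the edge `jx`
    have hjx_notMem : ∀ e ∈ (tail.mapLe hHT).edges, e ∉ ({s(j, x)} : Set (Sym2 ι)) := by
      rintro e he rfl
      rw [Walk.edges_mapLe_eq_edges] at he
      exact ((Walk.cons_isPath_iff _ _).mp hp).2 (tail.fst_mem_support_of_mem_edges he)
    exact .inr ⟨x, hjx, ⟨(tail.mapLe hHT).toDeleteEdges _ hjx_notMem⟩⟩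

lemma branch_ssubset_branch (hT : T.IsAcyclic) {i j x : ι} (hij : T.Adj i j) (hjx : T.Adj j x)
    (hxi : x ≠ i) : branch T j x ⊂ branch T i j := by
  classical
  refine ⟨fun y ⟨w⟩ => ?_, fun h => left_notMem_branch hT hjx (h (self_mem_branch T i j))⟩
  have hij_notMem :
      ∀ e ∈ (w.mapLe (deleteEdges_le _)).edges, e ∉ ({s(i, j)} : Set (Sym2 ι)) := by
    rintro e he rfl
    rw [Walk.edges_mapLe_eq_edges] at he
    exact left_notMem_branch hT hjx ⟨w.takeUntil j (w.snd_mem_support_of_mem_edges he)⟩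
  have hjx' : (T.deleteEdges {s(i, j)}).Adj j x := by
    simp only [deleteEdges_adj, Set.mem_singleton_iff, Sym2.eq_iff]
    exact ⟨hjx, by rintro (⟨rfl, -⟩ | ⟨-, rfl⟩) <;> simp_all⟩
  exact ⟨.cons hjx' ((w.mapLe (deleteEdges_le _)).toDeleteEdges _ hij_notMem)⟩

end Forest

section Bags

variable {ι V : Type*} {G : SimpleGraph V} {T : SimpleGraph ι} (bags : ι → Finset V)

def bagUnion (D : Set ι) : Set V :=
  ⋃ y ∈ D, (bags y : Set V)

variable {bags}

@[simp]
lemma mem_bagUnion {D : Set ι} {v : V} : v ∈ bagUnion bags D ↔ ∃ y ∈ D, v ∈ bags y := by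
  simp [bagUnion]

lemma exists_walk_of_mem_bags (hconn : ∀ v, (T.induce {i | v ∈ bags i}).Connected) {v : V}
    {y z : ι} (hy : v ∈ bags y) (hz : v ∈ bags z) :
    ∃ w : T.Walk y z, ∀ i ∈ w.support, v ∈ bags i := by
  obtain ⟨w⟩ := (hconn v).preconnected ⟨y, hy⟩ ⟨z, hz⟩
  refine ⟨w.map (Embedding.induce _).toHom, fun i hi => ?_⟩
  obtain ⟨i, -, rfl⟩ := List.mem_map.mp ((Walk.support_map _ w) ▸ hi)
  exact i.2

lemma mem_branch_of_mem_bags (hconn : ∀ v, (T.induce {i | v ∈ bags i}).Connected) {j x y z : ι}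
    {v : V} (hvj : v ∉ bags j) (hy : y ∈ branch T j x) (hvy : v ∈ bags y) (hvz : v ∈ bags z) :
    z ∈ branch T j x := by
  obtain ⟨w, hw⟩ := exists_walk_of_mem_bags hconn hvy hvz
  -- the bags along `w` all contain `v`, so `w` cannot pass through `j`
  have hjx : ∀ e ∈ w.edges, e ∉ ({s(j, x)} : Set (Sym2 ι)) := by
    rintro e he rfl
    exact hvj (hw j (w.fst_mem_support_of_mem_edges he))
  exact hy.trans ⟨w.toDeleteEdges _ hjx⟩

lemma mem_bagUnion_branch_of_adj (hedge : ∀ u v, G.Adj u v → ∃ i, u ∈ bags i ∧ v ∈ bags i)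
    (hconn : ∀ v, (T.induce {i | v ∈ bags i}).Connected) {j x : ι} {u v : V}
    (hv : v ∈ bagUnion bags (branch T j x)) (hvj : v ∉ bags j) (hvu : G.Adj v u) :
    u ∈ bagUnion bags (branch T j x) := by
  obtain ⟨y, hy, hvy⟩ := mem_bagUnion.mp hv
  obtain ⟨z, hvz, huz⟩ := hedge v u hvu
  exact mem_bagUnion.mpr ⟨z, mem_branch_of_mem_bags hconn hvj hy hvy hvz, huz⟩

lemma mem_bagUnion_reachable_of_adj (hedge : ∀ u v, G.Adj u v → ∃ i, u ∈ bags i ∧ v ∈ bags i)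
    (hconn : ∀ v, (T.induce {i | v ∈ bags i}).Connected) {i : ι} {u v : V}
    (hv : v ∈ bagUnion bags {y | T.Reachable i y}) (hvu : G.Adj v u) :
    u ∈ bagUnion bags {y | T.Reachable i y} := by
  obtain ⟨y, hy, hvy⟩ := mem_bagUnion.mp hv
  obtain ⟨z, hvz, huz⟩ := hedge v u hvu
  obtain ⟨w, -⟩ := exists_walk_of_mem_bags hconn hvy hvz
  exact mem_bagUnion.mpr ⟨z, hy.trans ⟨w⟩, huz⟩

end Bags

lemma exists_subset_ncard_union_between {ι V : Type*} [Finite V] {k : ℕ} (f : ι → Set V)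
    (s : Finset ι) (hf : ∀ a ∈ s, 2 * (f a).ncard ≤ k) (S₀ : Set V) (hS₀ : S₀.ncard < k)
    (hs : k ≤ 2 * (S₀ ∪ ⋃ a ∈ s, f a).ncard) :
    ∃ t ⊆ s, k ≤ 2 * (S₀ ∪ ⋃ a ∈ t, f a).ncard ∧ (S₀ ∪ ⋃ a ∈ t, f a).ncard ≤ k := by
  classical
  induction s using Finset.induction_on generalizing S₀ with
  | empty => exact ⟨∅, subset_rfl, by simpa using hs, by simpa using hS₀.le⟩
  | insert a s _ ih =>
    by_cases hS₀k : k ≤ 2 * S₀.ncard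
    · exact ⟨∅, Finset.empty_subset _, by simpa using hS₀k, by simpa using hS₀.le⟩
    have hfa := hf a (Finset.mem_insert_self a s)
    obtain ⟨t, hts, ht⟩ := ih (fun b hb => hf b (Finset.mem_insert_of_mem hb)) (S₀ ∪ f a)
      (by have := Set.ncard_union_le S₀ (f a); omega)
      (by rwa [Set.union_assoc, ← Finset.set_biUnion_insert])
    refine ⟨insert a t, Finset.insert_subset_insert a hts, ?_⟩
    rwa [Finset.set_biUnion_insert, ← Set.union_assoc]

section Pieces

variable {V : Type*} [Finite V] (G : SimpleGraph V)

def boundaryIn (R W : Set V) : Set V :=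
  {v ∈ W | ∃ u ∈ R \ W, G.Adj v u}

def HasSparseBoundaryPiece (k c : ℕ) (R : Set V) : Prop :=
  ∃ W ⊆ R, W.Nonempty ∧ W.ncard ≤ k ∧ k * (boundaryIn G R W).ncard ≤ c * W.ncard

variable {G}

theorem exists_partition_of_forall_hasSparseBoundaryPiece {k c : ℕ}
    (hpiece : ∀ R : Set V, R.Nonempty → HasSparseBoundaryPiece G k c R) (R : Set V) :
    ∃ (p : V → Set V) (B : Set V),
      (∀ v ∈ R, v ∈ p v ∧ p v ⊆ R ∧ (p v).ncard ≤ k ∧ ∀ w ∈ p v, p w = p v) ∧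
      k * B.ncard ≤ c * R.ncard ∧
      ∀ u ∈ R, ∀ v ∈ R, G.Adj u v → p u ≠ p v → u ∈ B ∨ v ∈ B := by
  classical
  obtain rfl | hR := R.eq_empty_or_nonempty
  · exact ⟨fun v => {v}, ∅, by simp, by simp, by simp⟩
  obtain ⟨W, hWR, hW, hWk, hWb⟩ := hpiece R hR
  obtain ⟨p, B, hp, hB, hcut⟩ := exists_partition_of_forall_hasSparseBoundaryPiece hpiece (R \ W)
  refine ⟨fun v => if v ∈ W then W else p v, B ∪ boundaryIn G R W, fun v hv => ?_, ?_, ?_⟩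
  · by_cases hvW : v ∈ W
    · simp_all +contextual
    · obtain ⟨hvp, hpR, hpk, hpp⟩ := hp v ⟨hv, hvW⟩
      simp only [if_neg hvW]
      refine ⟨hvp, hpR.trans Set.sdiff_subset, hpk, fun w hw => ?_⟩
      rw [if_neg (hpR hw).2, hpp w hw]
  · calc k * (B ∪ boundaryIn G R W).ncard
        ≤ k * B.ncard + k * (boundaryIn G R W).ncard := by
          rw [← mul_add]; exact Nat.mul_le_mul_left _ (Set.ncard_union_le _ _)
      _ ≤ c * (R \ W).ncard + c * W.ncard := add_le_add hB hWb
      _ = c * R.ncard := by rw [← mul_add, Set.ncard_sdiff_add_ncard_of_subset hWR]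
  · intro u hu v hv huv hne
    by_cases huW : u ∈ W <;> by_cases hvW : v ∈ W
    · simp [huW, hvW] at hne
    · exact .inl (.inr ⟨huW, v, ⟨hv, hvW⟩, huv⟩)
    · exact .inr (.inr ⟨hvW, u, ⟨hu, huW⟩, huv.symm⟩)
    · simp only [if_neg huW, if_neg hvW] at hne
      exact (hcut u ⟨hu, huW⟩ v ⟨hv, hvW⟩ huv hne).imp .inl .inl
termination_by R.ncard
decreasing_by exact Set.ncard_lt_ncard (hWR.sdiff_ssubset_of_nonempty hW)

end Pieces

section TreeDecomposition

variable {V : Type} [Finite V] {G : SimpleGraph V} {m : ℕ} {bags : Fin m → Finset V}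
  {T : SimpleGraph (Fin m)} {h k : ℕ}

lemma hasSparseBoundaryPiece_of_subset_insert_branches (hT : IsTreeDecomposition G bags T)
    (hbag : ∀ i, (bags i).card ≤ h + 1) (hk : 2 * (h + 1) ≤ k) {R : Set V} {D : Set (Fin m)}
    (hD : k ≤ 2 * (R ∩ bagUnion bags D).ncard) (j : Fin m) (X : Finset (Fin m))
    (hX : ∀ x ∈ X, 2 * (R ∩ bagUnion bags (branch T j x)).ncard < k)
    (hDX : D ⊆ insert j (⋃ x ∈ X, branch T j x)) :
    HasSparseBoundaryPiece G k (2 * (h + 1)) R := by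
  set S₀ : Set V := R ∩ bags j
  have hS₀ : S₀.ncard ≤ h + 1 :=
    (Set.ncard_le_ncard Set.inter_subset_right).trans ((Set.ncard_coe_finset _).trans_le (hbag j))
  have hcover : R ∩ bagUnion bags D ⊆ S₀ ∪ ⋃ x ∈ X, R ∩ bagUnion bags (branch T j x) := by
    rintro v ⟨hvR, hvD⟩
    obtain ⟨y, hyD, hvy⟩ := mem_bagUnion.mp hvD
    rcases hDX hyD with rfl | hy
    · exact .inl ⟨hvR, hvy⟩
    · obtain ⟨x, hxX, hyx⟩ := Set.mem_iUnion₂.mp hy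
      exact .inr (Set.mem_biUnion hxX ⟨hvR, mem_bagUnion.mpr ⟨y, hyx, hvy⟩⟩)
  obtain ⟨t, -, hWk₂, hWk⟩ := exists_subset_ncard_union_between _ X (fun x hx => (hX x hx).le)
    S₀ (by omega) (hD.trans (Nat.mul_le_mul_left 2 (Set.ncard_le_ncard hcover)))
  set W := S₀ ∪ ⋃ x ∈ t, R ∩ bagUnion bags (branch T j x)
  have hWR : W ⊆ R :=
    Set.union_subset Set.inter_subset_left (Set.iUnion₂_subset fun _ _ => Set.inter_subset_left)
  -- a vertex of `W` outside the bag `j` lies in a branch at `j`, all of whose neighbours do too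
  have hboundary : boundaryIn G R W ⊆ bags j := by
    rintro v ⟨hvW, u, ⟨huR, huW⟩, hvu⟩
    by_contra hvj
    obtain ⟨-, x, hxt, hvx⟩ : v ∈ R ∧ ∃ x ∈ t, v ∈ bagUnion bags (branch T j x) := by
      simpa [W, S₀, hvj] using hvW
    exact huW (.inr (Set.mem_biUnion hxt
      ⟨huR, mem_bagUnion_branch_of_adj hT.2.2.1 hT.2.2.2 hvx hvj hvu⟩))
  refine ⟨W, hWR, Set.nonempty_of_ncard_ne_zero (by omega), hWk, ?_⟩
  have := (Set.ncard_le_ncard hboundary).trans ((Set.ncard_coe_finset _).trans_le (hbag j))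
  calc k * (boundaryIn G R W).ncard ≤ k * (h + 1) := Nat.mul_le_mul_left k this
    _ ≤ 2 * (h + 1) * W.ncard := by nlinarith

lemma hasSparseBoundaryPiece_of_exists_large_branch (hT : IsTreeDecomposition G bags T)
    (hbag : ∀ i, (bags i).card ≤ h + 1) (hk : 2 * (h + 1) ≤ k) {R : Set V}
    (hlarge : ∃ i j, T.Adj i j ∧ k ≤ 2 * (R ∩ bagUnion bags (branch T i j)).ncard) :
    HasSparseBoundaryPiece G k (2 * (h + 1)) R := by
  classical
  obtain ⟨⟨i, j⟩, ⟨hij, hlarge_ij⟩, hmin⟩ := Set.exists_min_image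
    {p : Fin m × Fin m | T.Adj p.1 p.2 ∧ k ≤ 2 * (R ∩ bagUnion bags (branch T p.1 p.2)).ncard}
    (fun p => (branch T p.1 p.2).ncard) (Set.toFinite _)
    (by obtain ⟨i, j, hij⟩ := hlarge; exact ⟨(i, j), hij⟩)
  refine hasSparseBoundaryPiece_of_subset_insert_branches hT hbag hk hlarge_ij j
    ({x | T.Adj j x ∧ x ≠ i} : Finset (Fin m)) (fun x hx => ?_) (fun y hy => ?_)
  · -- the branches below a minimal large branch are strictly smaller, hence small
    obtain ⟨hjx, hxi⟩ := Finset.mem_filter.mp hx |>.2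
    have hlt := Set.ncard_lt_ncard (branch_ssubset_branch hT.1 hij hjx hxi)
    by_contra hge
    exact (hmin (j, x) ⟨hjx, not_lt.mp hge⟩).not_gt hlt
  · rcases eq_or_mem_branch_of_reachable (deleteEdges_le _) hy with rfl | ⟨x, hjx, hyx⟩
    · exact Set.mem_insert _ _
    · rw [deleteEdges_adj, Set.mem_singleton_iff] at hjx
      have hxi : x ≠ i := by rintro rfl; exact hjx.2 Sym2.eq_swap
      exact .inr (Set.mem_biUnion (by simp [hjx.1, hxi]) hyx)

lemma hasSparseBoundaryPiece_of_forall_small_branch (hT : IsTreeDecomposition G bags T)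
    (hbag : ∀ i, (bags i).card ≤ h + 1) (hk : 2 * (h + 1) ≤ k) {R : Set V} (hR : R.Nonempty)
    (hsmall : ∀ i j, T.Adj i j → 2 * (R ∩ bagUnion bags (branch T i j)).ncard < k) :
    HasSparseBoundaryPiece G k (2 * (h + 1)) R := by
  classical
  obtain ⟨v, hv⟩ := hR
  obtain ⟨i, hvi⟩ := hT.2.1 v
  set C := R ∩ bagUnion bags {y | T.Reachable i y}
  by_cases hC : k ≤ 2 * C.ncard
  · refine hasSparseBoundaryPiece_of_subset_insert_branches hT hbag hk hC i
      ({x | T.Adj i x} : Finset (Fin m)) (fun x hx => hsmall i x (by simpa using hx))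
      (fun y hy => ?_)
    rcases eq_or_mem_branch_of_reachable le_rfl hy with rfl | ⟨x, hix, hyx⟩
    · exact Set.mem_insert _ _
    · exact .inr (Set.mem_biUnion (by simpa using hix) hyx)
  · -- the part of `R` over a whole component of `T` is a piece without boundary
    have hboundary : boundaryIn G R C = ∅ := by
      refine Set.eq_empty_of_forall_notMem ?_
      rintro u ⟨⟨-, huC⟩, w, ⟨hwR, hwC⟩, huw⟩
      exact hwC ⟨hwR, mem_bagUnion_reachable_of_adj hT.2.2.1 hT.2.2.2 huC huw⟩
    refine ⟨C, Set.inter_subset_left, ⟨v, hv, mem_bagUnion.mpr ⟨i, .refl i, hvi⟩⟩, by omega, ?_⟩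
    simp [hboundary]

theorem hasSparseBoundaryPiece_of_isTreeDecomposition (hT : IsTreeDecomposition G bags T)
    (hbag : ∀ i, (bags i).card ≤ h + 1) (hk : 0 < k) {R : Set V} (hR : R.Nonempty) :
    HasSparseBoundaryPiece G k (2 * (h + 1)) R := by
  by_cases hkh : 2 * (h + 1) ≤ k
  · by_cases hlarge : ∃ i j, T.Adj i j ∧ k ≤ 2 * (R ∩ bagUnion bags (branch T i j)).ncard
    · exact hasSparseBoundaryPiece_of_exists_large_branch hT hbag hkh hlarge
    · push Not at hlarge
      exact hasSparseBoundaryPiece_of_forall_small_branch hT hbag hkh hR hlarge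
  · obtain ⟨v, hv⟩ := hR
    have hb : (boundaryIn G R {v}).ncard ≤ 1 :=
      (Set.ncard_le_ncard (Set.sep_subset _ _)).trans (Set.ncard_singleton v).le
    refine ⟨{v}, Set.singleton_subset_iff.mpr hv, Set.singleton_nonempty v, ?_, ?_⟩
    · rw [Set.ncard_singleton]; exact hk
    · rw [Set.ncard_singleton]; nlinarith

end TreeDecomposition

lemma ncard_cut_le {V α : Type*} [Finite V] (G : SimpleGraph V) {d : ℕ}
    (hdeg : ∀ v, (G.neighborSet v).ncard ≤ d) (p : V → α) (B : Set V)
    (hB : ∀ u v, G.Adj u v → p u ≠ p v → u ∈ B ∨ v ∈ B) :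
    {e ∈ G.edgeSet | ∃ v w, e = s(v, w) ∧ p v ≠ p w}.ncard ≤ B.ncard * d := by
  classical
  have := Fintype.ofFinite V
  have hcut : {e ∈ G.edgeSet | ∃ v w, e = s(v, w) ∧ p v ≠ p w} ⊆
      ⋃ b ∈ B.toFinset, G.incidenceSet b := by
    rintro _ ⟨he, v, w, rfl, hvw⟩
    rcases hB v w he hvw with hv | hw
    · exact Set.mem_biUnion (Set.mem_toFinset.mpr hv) ⟨he, Sym2.mem_mk_left v w⟩
    · exact Set.mem_biUnion (Set.mem_toFinset.mpr hw) ⟨he, Sym2.mem_mk_right v w⟩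
  have hinc : ∀ b, (G.incidenceSet b).ncard ≤ d := fun b => by
    rw [← Nat.card_coe_set_eq, Nat.card_congr (G.incidenceSetEquivNeighborSet b),
      Nat.card_coe_set_eq]
    exact hdeg b
  calc _ ≤ (⋃ b ∈ B.toFinset, G.incidenceSet b).ncard := Set.ncard_le_ncard hcut
    _ ≤ ∑ b ∈ B.toFinset, (G.incidenceSet b).ncard := Finset.set_ncard_biUnion_le _ _
    _ ≤ B.toFinset.card • d := Finset.sum_le_card_nsmul _ _ _ fun b _ => hinc b
    _ = B.ncard * d := by rw [smul_eq_mul, Set.ncard_eq_toFinset_card']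

open Filter in
lemma exists_nat_mul_log_add_le (A B : ℝ) : ∃ k : ℕ, 0 < k ∧ A * Real.log k + B ≤ k := by
  have hlog : (fun x => A * Real.log x + B) =o[atTop] id :=
    (Real.isLittleO_log_id_atTop.const_mul_left A).add (Asymptotics.isLittleO_const_id_atTop B)
  obtain ⟨k, hk, hk0⟩ := ((tendsto_natCast_atTop_atTop.eventually (hlog.bound one_pos)).and
    (eventually_gt_atTop 0)).exists
  refine ⟨k, hk0, (le_abs_self _).trans ?_⟩
  simpa using hk

lemma two_mul_mul_succ_le_mul {d h k : ℕ} {ε : ℝ} (hε0 : 0 < ε) (hε1 : ε ≤ 1) (hk0 : 0 < k)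
    (hk : (2886000 * d ^ 5 * (Nat.factorial (2 * h + 3)) *
      (1 + Real.log k + Real.log (Nat.factorial (2 * h + 3))) / ε ^ 3 : ℝ) ≤ k) :
    2 * d * (h + 1) ≤ ε * k := by
  set F := Nat.factorial (2 * h + 3)
  have hdh : 2 * d * (h + 1) ≤ 2886000 * d ^ 5 * F :=
    calc 2 * d * (h + 1) ≤ 2886000 * d ^ 5 * (2 * h + 3) := by
          nlinarith [Nat.le_self_pow (by norm_num : 5 ≠ 0) d]
      _ ≤ 2886000 * d ^ 5 * F := Nat.mul_le_mul_left _ (Nat.self_le_factorial _)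
  have hlog : 1 ≤ 1 + Real.log k + Real.log F := by
    have := Real.log_nonneg (Nat.one_le_cast.mpr hk0)
    have := Real.log_nonneg (Nat.one_le_cast.mpr (Nat.factorial_pos (2 * h + 3)))
    linarith
  set C : ℝ := 2886000 * d ^ 5 * F with hC
  calc 2 * d * (h + 1) ≤ C := by rw [hC]; exact_mod_cast hdh
    _ ≤ C / ε ^ 2 := le_div_self (by positivity) (by positivity) (by nlinarith)
    _ = ε * (C / ε ^ 3) := by field_simp
    _ ≤ ε * (C * (1 + Real.log k + Real.log F) / ε ^ 3) := by
        gcongr; exact le_mul_of_one_le_right (by positivity) hlog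
    _ ≤ ε * k := by gcongr

/-- hyperfiniteness of bounded-degree bounded-treewidth graphs: for every
`ε ∈ (0, 1/2)` there is a positive integer `k` depending only on `d`, `h`, `ε` — namely any
`k` satisfying `k ≥ 2886000·d⁵·(2h+3)!·(1 + log k + log((2h+3)!))/ε³`, and such `k` exists —
for which `V` can be partitioned into parts of size at most `k` with at most `ε·|V|` edges
of `G` joining distinct parts. -/
theorem treewidth_hyperfinite {V : Type} [Fintype V] (G : SimpleGraph V)
    (d h : ℕ) (hdeg : ∀ v : V, (G.neighborSet v).ncard ≤ d)
    (htw : HasTreewidthLE G h)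
    (ε : ℝ) (hε : ε ∈ Set.Ioo (0 : ℝ) (1/2)) :
    (∃ k : ℕ, 0 < k ∧
      (2886000 * d ^ 5 * (Nat.factorial (2 * h + 3)) *
        (1 + Real.log k + Real.log (Nat.factorial (2 * h + 3))) / ε ^ 3 : ℝ) ≤ k) ∧
    (∀ k : ℕ, 0 < k →
      (2886000 * d ^ 5 * (Nat.factorial (2 * h + 3)) *
        (1 + Real.log k + Real.log (Nat.factorial (2 * h + 3))) / ε ^ 3 : ℝ) ≤ k →
      ∃ f : V → Set V,
        (∀ v : V, v ∈ f v) ∧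
        (∀ v : V, ∀ w ∈ f v, f v = f w) ∧
        (∀ v : V, (f v).ncard ≤ k) ∧
        ({e ∈ G.edgeSet | ∃ v w : V, e = s(v, w) ∧ f v ≠ f w}.ncard : ℝ) ≤
          ε * (Fintype.card V : ℝ)) := by
  refine ⟨?_, fun k hk0 hk => ?_⟩
  · set C : ℝ := 2886000 * d ^ 5 * (Nat.factorial (2 * h + 3))
    obtain ⟨k, hk0, hk⟩ := exists_nat_mul_log_add_le (C / ε ^ 3)
      (C * (1 + Real.log (Nat.factorial (2 * h + 3))) / ε ^ 3)
    exact ⟨k, hk0, le_of_eq_of_le (by ring) hk⟩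
  obtain ⟨m, bags, T, hT, hbag⟩ := htw
  obtain ⟨p, B, hp, hB, hcut⟩ := exists_partition_of_forall_hasSparseBoundaryPiece
    (fun _ hR => hasSparseBoundaryPiece_of_isTreeDecomposition hT hbag hk0 hR) Set.univ
  refine ⟨p, fun v => (hp v trivial).1, fun v w hw => ((hp v trivial).2.2.2 w hw).symm,
    fun v => (hp v trivial).2.2.1, ?_⟩
  have hcount := ncard_cut_le G hdeg p B fun u v => hcut u trivial v trivial
  have hεk := two_mul_mul_succ_le_mul hε.1 (hε.2.le.trans (by norm_num)) hk0 hk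
  rw [Set.ncard_univ, Nat.card_eq_fintype_card] at hB
  refine le_of_mul_le_mul_left ?_ (Nat.cast_pos.mpr hk0 : (0 : ℝ) < k)
  calc (k : ℝ) * _ ≤ k * (B.ncard * d) := by gcongr; exact_mod_cast hcount
    _ = (k * B.ncard : ℕ) * d := by push_cast; ring
    _ ≤ (2 * (h + 1) * Fintype.card V : ℕ) * d := by gcongr
    _ = 2 * d * (h + 1) * Fintype.card V := by push_cast; ring
    _ ≤ ε * k * Fintype.card V := by gcongr
    _ = k * (ε * Fintype.card V) := by ring
end
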